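/- arXiv:2510.21304 — 3 statements merged into one kernel-verified Lean document; each statement's English description precedes it below -/
import Mathlib

section
/- Let OpSpec be a basic operation specification and let CMod_1, CMod_2 be basic consistency models with CMod_1 ≼ CMod_2 (the context of every event under CMod_1 is contained in its context under CMod_2, in every abstract execution). Then every abstract execution valid w.r.t. (CMod_2, OpSpec) is also valid w.r.t. (CMod_1, OpSpec). -/
namespace AFC

/-! ## Events

Each event carries a unique identifier, a replica, a set of accessed objects, and a
partial map recording the value it writes to each object.  Initial events access every
object and write to all of them. -/

structure Evt (Obj Val Rep Id : Type) : Type where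
  ident : Id
  rep : Rep
  obj : Set Obj
  wval : Obj → Option Val
  isInit : Bool

/-- Well-formed initial event: accesses every object, with `wval` totally defined. -/
def Evt.InitWF {Obj Val Rep Id : Type} (e : Evt Obj Val Rep Id) : Prop :=
  e.isInit = true ∧ e.obj = Set.univ ∧ ∀ x, (e.wval x).isSome

/-! ## Histories -/

structure History (Obj Val Rep Id : Type) : Type where
  /-- the (finite) set of events of the history -/
  E : Set (Evt Obj Val Rep Id)
  finE : E.Finite
  /-- the distinguished initial event -/
  init : Evt Obj Val Rep Id
  /-- session order -/
  so : Evt Obj Val Rep Id → Evt Obj Val Rep Id → Prop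
  /-- `wrInv x r` is the (possibly empty) set of events read by `r` on object `x`
  (the inverse of the write-read relation, a total function). -/
  wrInv : Obj → Evt Obj Val Rep Id → Set (Evt Obj Val Rep Id)
  init_mem : init ∈ E
  init_wf : init.InitWF
  init_uniq : ∀ e ∈ E, e.isInit = true → e = init
  ids_inj : ∀ e ∈ E, ∀ e' ∈ E, e.ident = e'.ident → e = e'
  so_dom : ∀ e e', so e e' → e ∈ E ∧ e' ∈ E
  so_irrefl : ∀ e, ¬ so e e
  so_trans : ∀ e₁ e₂ e₃, so e₁ e₂ → so e₂ e₃ → so e₁ e₃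
  init_so : ∀ e ∈ E, e ≠ init → so init e
  so_rep : ∀ e ∈ E, ∀ e' ∈ E, e ≠ init → e' ≠ init → e ≠ e' →
    ((so e e' ∨ so e' e) ↔ e.rep = e'.rep)
  wr_dom : ∀ x e w, w ∈ wrInv x e → w ∈ E
  wr_reads_dom : ∀ x e, wrInv x e ≠ ∅ → e ∈ E
  acyclic : ∀ e, ¬ Relation.TransGen (fun a b => so a b ∨ ∃ x, a ∈ wrInv x b) e e

/-- The write-read relation of a history (union over all objects). -/
def History.wr {Obj Val Rep Id : Type} (h : History Obj Val Rep Id)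
    (w r : Evt Obj Val Rep Id) : Prop :=
  ∃ x, w ∈ h.wrInv x r

/-! ## Abstract executions -/

structure AExec (Obj Val Rep Id : Type) extends History Obj Val Rep Id where
  /-- receive-before relation -/
  rb : Evt Obj Val Rep Id → Evt Obj Val Rep Id → Prop
  /-- arbitration order -/
  ar : Evt Obj Val Rep Id → Evt Obj Val Rep Id → Prop
  rb_dom : ∀ e e', rb e e' → e ∈ E ∧ e' ∈ E
  rb_irrefl : ∀ e, ¬ rb e e
  rb_asymm : ∀ e e', rb e e' → ¬ rb e' e
  /-- `rb = rb ; so*` -/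
  rb_so_closed : ∀ e e', rb e e' ↔ ∃ c, rb e c ∧ Relation.ReflTransGen so c e'
  so_sub_rb : ∀ e e', so e e' → rb e e'
  wr_sub_rb : ∀ x w r, w ∈ wrInv x r → rb w r
  rb_sub_ar : ∀ e e', rb e e' → ar e e'
  ar_dom : ∀ e e', ar e e' → e ∈ E ∧ e' ∈ E
  ar_irrefl : ∀ e, ¬ ar e e
  ar_trans : ∀ e₁ e₂ e₃, ar e₁ e₂ → ar e₂ e₃ → ar e₁ e₃
  ar_total : ∀ e ∈ E, ∀ e' ∈ E, e ≠ e' → ar e e' ∨ ar e' e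

/-! ## Relation expressions of visibility formulas -/

inductive RelExpr : Type
  | rid : RelExpr
  | rso : RelExpr
  | rwr : RelExpr
  | rrb : RelExpr
  | rar : RelExpr
  | runion : RelExpr → RelExpr → RelExpr
  | rcomp : RelExpr → RelExpr → RelExpr
  | rtc : RelExpr → RelExpr

/-- Semantics of a relation expression in an abstract execution. -/
def RelExpr.sem {Obj Val Rep Id : Type} (ξ : AExec Obj Val Rep Id) :
    RelExpr → Evt Obj Val Rep Id → Evt Obj Val Rep Id → Prop
  | .rid => Eq
  | .rso => ξ.so
  | .rwr => fun a b => ∃ x, a ∈ ξ.wrInv x b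
  | .rrb => ξ.rb
  | .rar => ξ.ar
  | .runion r s => fun a b => r.sem ξ a b ∨ s.sem ξ a b
  | .rcomp r s => fun a b => ∃ c, r.sem ξ a c ∧ s.sem ξ c b
  | .rtc r => Relation.TransGen (r.sem ξ)

/-- A relation expression is simple if it is one of `so`, `wr`, `rb`, `ar`. -/
def RelExpr.Simple : RelExpr → Prop
  | .rso => True
  | .rwr => True
  | .rrb => True
  | .rar => True
  | _ => False

/-- A relation expression is arbitration-free if `ar` does not occur in it. -/
def RelExpr.ArFree : RelExpr → Prop
  | .rid => True
  | .rso => True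
  | .rwr => True
  | .rrb => True
  | .rar => False
  | .runion r s => r.ArFree ∧ s.ArFree
  | .rcomp r s => r.ArFree ∧ s.ArFree
  | .rtc r => r.ArFree

/-! ## Basic visibility formulas and basic consistency models -/

/-- A basic visibility formula: a path of relation expressions. -/
structure BasicVis : Type where
  rels : List RelExpr

/-- `v.holds ξ x e₀ eₙ` : the basic visibility formula `v` relates `e₀` to `eₙ` on
object `x` in the abstract execution `ξ`. -/
def BasicVis.holds {Obj Val Rep Id : Type} (v : BasicVis) (ξ : AExec Obj Val Rep Id)
    (x : Obj) (e₀ eₙ : Evt Obj Val Rep Id) : Prop :=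
  ∃ es : ℕ → Evt Obj Val Rep Id,
    es 0 = e₀ ∧ es v.rels.length = eₙ ∧
    (∀ i, i ≤ v.rels.length → es i ∈ ξ.E) ∧
    (∀ (i : ℕ) (R : RelExpr), v.rels[i]? = some R → R.sem ξ (es i) (es (i + 1))) ∧
    (e₀.wval x).isSome ∧ ξ.wrInv x eₙ ≠ ∅

def BasicVis.SimpleForm (v : BasicVis) : Prop := ∀ r ∈ v.rels, r.Simple

def BasicVis.ArbFree (v : BasicVis) : Prop := ∀ r ∈ v.rels, r.ArFree

/-- The context (as a set of events) of event `r` for object `x`, determined by a set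
`F` of basic visibility formulas. -/
def bctxt {Obj Val Rep Id : Type} (F : Set BasicVis) (x : Obj) (ξ : AExec Obj Val Rep Id)
    (r : Evt Obj Val Rep Id) : Set (Evt Obj Val Rep Id) :=
  {e | e ∈ ξ.E ∧ ∃ v ∈ F, v.holds ξ x e r}

/-- A basic consistency model: a set of basic visibility formulas whose denotations
cover `so` and each `wr_x`. -/
structure BasicCMod (Obj Val Rep Id : Type) : Type where
  formulas : Set BasicVis
  covers_so : ∃ v ∈ formulas, ∀ (ξ : AExec Obj Val Rep Id) (x : Obj) e e',
    ξ.so e e' → (e.wval x).isSome → ξ.wrInv x e' ≠ ∅ → v.holds ξ x e e'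
  covers_wr : ∃ v ∈ formulas, ∀ (ξ : AExec Obj Val Rep Id) (x : Obj) e e',
    e ∈ ξ.wrInv x e' → (e.wval x).isSome → v.holds ξ x e e'

/-- `C₁` is weaker than `C₂` : the context of every event under `C₁` is contained in
its context under `C₂`, in every abstract execution. -/
def BWeaker {Obj Val Rep Id : Type} (C₁ C₂ : BasicCMod Obj Val Rep Id) : Prop :=
  ∀ (ξ : AExec Obj Val Rep Id) (x : Obj) (e : Evt Obj Val Rep Id),
    bctxt C₁.formulas x ξ e ⊆ bctxt C₂.formulas x ξ e

/-! ## Basic operation specifications -/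

structure BasicOpSpec (Obj Val Rep Id : Type) : Type where
  E : Set (Evt Obj Val Rep Id)
  /-- read predicate -/
  rspec : Evt Obj Val Rep Id → Prop
  /-- write specification: the (partial) map from read values to written values -/
  wspec : Evt Obj Val Rep Id → Option (Val → Option Val)

namespace BasicOpSpec

variable {Obj Val Rep Id : Type}

def IsRead (O : BasicOpSpec Obj Val Rep Id) (e : Evt Obj Val Rep Id) : Prop := O.rspec e

def IsWrite (O : BasicOpSpec Obj Val Rep Id) (e : Evt Obj Val Rep Id) : Prop :=
  (O.wspec e).isSome

def IsRW (O : BasicOpSpec Obj Val Rep Id) (e : Evt Obj Val Rep Id) : Prop :=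
  O.rspec e ∧ (O.wspec e).isSome

def IsCondRW (O : BasicOpSpec Obj Val Rep Id) (e : Evt Obj Val Rep Id) : Prop :=
  O.IsRW e ∧ ∃ f, O.wspec e = some f ∧ ∃ v, f v = none

/-- The operation-closure assumptions about basic operation specifications. -/
def WF (O : BasicOpSpec Obj Val Rep Id) : Prop :=
  -- initial events belong to the specification
  (∀ e : Evt Obj Val Rep Id, e.isInit = true → e ∈ O.E) ∧
  -- every (non-initial) event accesses a single object
  (∀ e ∈ O.E, e.isInit = false → ∃ x : Obj, e.obj = {x}) ∧
  -- at least one read and one write event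
  (∃ e ∈ O.E, O.IsRead e) ∧ (∃ e ∈ O.E, O.IsWrite e) ∧
  -- uniformity across replicas, identifiers and objects
  (∀ e ∈ O.E, e.isInit = false → ∀ (r : Rep) (i : Id) (x : Obj), ∃ e' ∈ O.E,
    e'.rep = r ∧ e'.ident = i ∧ e'.obj = {x} ∧ (O.rspec e' ↔ O.rspec e) ∧
    O.wspec e' = O.wspec e) ∧
  -- `wspec e`, when defined, is defined on at least one value
  (∀ e ∈ O.E, ∀ f, O.wspec e = some f → ∃ v, (f v).isSome) ∧
  -- a write which is not a read has a total constant write specification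
  (∀ e ∈ O.E, O.IsWrite e → ¬ O.IsRead e → ∃ f, O.wspec e = some f ∧ ∃ c, ∀ v, f v = some c) ∧
  -- every value enables some event to write
  (∀ v : Val, ∃ e ∈ O.E, ∃ f, O.wspec e = some f ∧ (f v).isSome) ∧
  -- if read-writes exist, every value enables some read-write
  ((∃ e ∈ O.E, O.IsRW e) →
    ∀ v : Val, ∃ e ∈ O.E, O.IsRW e ∧ ∃ f, O.wspec e = some f ∧ (f v).isSome) ∧
  -- if conditional read-writes exist, every value disables some conditional read-write
  ((∃ e ∈ O.E, O.IsCondRW e) →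
    ∀ v : Val, ∃ e ∈ O.E, O.IsCondRW e ∧ ∃ f, O.wspec e = some f ∧ f v = none)

end BasicOpSpec

/-! ## Validity w.r.t. basic storage specifications -/

/-- Validity of an abstract execution w.r.t. a basic storage specification, given by a
set `F` of basic visibility formulas and a basic operation specification `O`. -/
def BValid {Obj Val Rep Id : Type} (F : Set BasicVis) (O : BasicOpSpec Obj Val Rep Id)
    (ξ : AExec Obj Val Rep Id) : Prop :=
  ξ.E ⊆ O.E ∧
  ∀ e ∈ ξ.E, ∀ x : Obj,
    ((O.rspec e ∧ x ∈ e.obj) →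
      ∃ w ∈ bctxt F x ξ e,
        (∀ w' ∈ bctxt F x ξ e, w' ≠ w → ξ.ar w' w) ∧
        ξ.wrInv x e = {w} ∧
        e.wval x = (O.wspec e).bind (fun f => (w.wval x).bind f)) ∧
    (¬ (O.rspec e ∧ x ∈ e.obj) →
      ξ.wrInv x e = ∅ ∧ ∀ v : Val, e.wval x = (O.wspec e).bind (fun f => f v))

/-- A basic visibility formula `v` is vacuous w.r.t. `(F, O)`. -/
def BVacuous {Obj Val Rep Id : Type} (F : Set BasicVis) (O : BasicOpSpec Obj Val Rep Id)
    (v : BasicVis) : Prop :=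
  ∀ ξ : AExec Obj Val Rep Id, BValid F O ξ ↔ BValid (F \ {v}) O ξ

/-- A basic consistency model is in normal form w.r.t. `O` : all its formulas are
simple and none of them is vacuous. -/
def BInNormalForm {Obj Val Rep Id : Type} (O : BasicOpSpec Obj Val Rep Id)
    (N : BasicCMod Obj Val Rep Id) : Prop :=
  ∀ v ∈ N.formulas, v.SimpleForm ∧ ¬ BVacuous N.formulas O v

/-- `N` is a normal form of `C` w.r.t. `O`. -/
def BIsNormalFormOf {Obj Val Rep Id : Type} (O : BasicOpSpec Obj Val Rep Id)
    (C N : BasicCMod Obj Val Rep Id) : Prop :=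
  BInNormalForm O N ∧ ∀ ξ : AExec Obj Val Rep Id, BValid C.formulas O ξ ↔ BValid N.formulas O ξ

/-- A basic consistency model is arbitration-free w.r.t. `O` if some normal form of it
w.r.t. `O` consists of arbitration-free formulas. -/
def BArbFree {Obj Val Rep Id : Type} (C : BasicCMod Obj Val Rep Id)
    (O : BasicOpSpec Obj Val Rep Id) : Prop :=
  ∃ N : BasicCMod Obj Val Rep Id, BIsNormalFormOf O C N ∧ ∀ v ∈ N.formulas, v.ArbFree

/-! ## Causal consistency (basic version) -/

/-- The single visibility formula of causal consistency: `(e₀,e₁) ∈ rb⁺`,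
`e₀` writes `x` and `e₁` reads `x`. -/
def ccVis : BasicVis := { rels := [RelExpr.rtc RelExpr.rrb] }

theorem ccVis_holds {Obj Val Rep Id : Type} (ξ : AExec Obj Val Rep Id) (x : Obj)
    (e e' : Evt Obj Val Rep Id) (he : e ∈ ξ.E) (he' : e' ∈ ξ.E) (hrb : ξ.rb e e')
    (hw : (e.wval x).isSome) (hr : ξ.wrInv x e' ≠ ∅) :
    ccVis.holds ξ x e e' := by
  refine ⟨fun i => if i = 0 then e else e', if_pos rfl, ?_, ?_, ?_, hw, hr⟩
  · show (if (1 : ℕ) = 0 then e else e') = e'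
    simp
  · intro i _
    by_cases h : i = 0
    · simpa [h] using he
    · simpa [h] using he'
  · intro i R hR
    have hi : i = 0 ∧ R = RelExpr.rtc RelExpr.rrb := by
      cases i with
      | zero =>
        simp only [ccVis, List.getElem?_cons_zero, Option.some.injEq] at hR
        exact ⟨rfl, hR.symm⟩
      | succ n =>
        simp [ccVis] at hR
    obtain ⟨h0, hReq⟩ := hi
    subst h0; subst hReq
    simpa [RelExpr.sem] using Relation.TransGen.single hrb

/-- Causal consistency as a basic consistency model. -/
def CC (Obj Val Rep Id : Type) : BasicCMod Obj Val Rep Id where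
  formulas := {ccVis}
  covers_so := by
    refine ⟨ccVis, rfl, fun ξ x e e' hso hw hr => ?_⟩
    obtain ⟨he, he'⟩ := ξ.so_dom _ _ hso
    exact ccVis_holds ξ x e e' he he' (ξ.so_sub_rb _ _ hso) hw hr
  covers_wr := by
    refine ⟨ccVis, rfl, fun ξ x e e' hwr hw => ?_⟩
    have hne : ξ.wrInv x e' ≠ ∅ := by
      intro h; rw [h] at hwr; exact hwr
    exact ccVis_holds ξ x e e' (ξ.wr_dom _ _ _ hwr) (ξ.wr_reads_dom _ _ hne)
      (ξ.wr_sub_rb _ _ _ hwr) hw hne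

/-! ## Labelled transition systems, programs, storage implementations -/

structure LTS (S A : Type) : Type where
  start : S
  delta : S → A → Option S

def LTS.run {S A : Type} (L : LTS S A) : S → List A → Option S
  | s, [] => some s
  | s, a :: t =>
    match L.delta s a with
    | some s' => L.run s' t
    | none => none

def LTS.IsTrace {S A : Type} (L : LTS S A) (t : List A) : Prop :=
  (L.run L.start t).isSome

/-- An LTS is finite when it has no infinite execution. -/
def LTS.FiniteLTS {S A : Type} (L : LTS S A) : Prop :=
  ¬ ∃ f : ℕ → A, ∀ n : ℕ, L.IsTrace ((List.range n).map f)

/-- A program: an LTS whose actions include events, plus local actions, each action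
having a replica. -/
structure Program (Obj Val Rep Id : Type) : Type 1 where
  PState : Type
  PLoc : Type
  locRep : PLoc → Rep
  plts : LTS PState (Evt Obj Val Rep Id ⊕ PLoc)

/-- Actions of a storage implementation: synchronized actions pairing an event with its
write-read dependencies, send/receive actions carrying sets of events, and local
actions. -/
inductive IAct (Obj Val Rep Id Msg Loc : Type) : Type
  | sync (e : Evt Obj Val Rep Id) (m : Obj → Set (Evt Obj Val Rep Id))
  | send (r : Rep) (msg : Msg) (rcv : Set (Evt Obj Val Rep Id))
  | recv (r : Rep) (msg : Msg) (rcv : Set (Evt Obj Val Rep Id))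
  | loc (r : Rep) (a : Loc)

namespace IAct

variable {Obj Val Rep Id Msg Loc : Type}

def rep : IAct Obj Val Rep Id Msg Loc → Rep
  | .sync e _ => e.rep
  | .send r _ _ => r
  | .recv r _ _ => r
  | .loc r _ => r

def rcvSet : IAct Obj Val Rep Id Msg Loc → Set (Evt Obj Val Rep Id)
  | .send _ _ S => S
  | .recv _ _ S => S
  | _ => ∅

def IsRecv : IAct Obj Val Rep Id Msg Loc → Prop
  | .recv _ _ _ => True
  | _ => False

end IAct

/-- The list of events occurring in synchronized actions of a trace. -/
def syncEvents {Obj Val Rep Id Msg Loc : Type} (t : List (IAct Obj Val Rep Id Msg Loc)) :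
    List (Evt Obj Val Rep Id) :=
  t.filterMap (fun a => match a with | .sync e _ => some e | _ => none)

/-- Well-formedness of implementation traces: every event occurs in at most one
synchronized action, the events of the `rcvSet` of a send/receive action occur in
earlier actions, and every receive is matched by an earlier send carrying the same
message and the same set of events. -/
def TraceWF {Obj Val Rep Id Msg Loc : Type} (t : List (IAct Obj Val Rep Id Msg Loc)) :
    Prop :=
  (syncEvents t).Nodup ∧
  (∀ (i : ℕ) (a : IAct Obj Val Rep Id Msg Loc), t[i]? = some a →
    ∀ e ∈ a.rcvSet, ∃ j < i, ∃ m, t[j]? = some (IAct.sync e m)) ∧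
  (∀ (i : ℕ) (r : Rep) (μ : Msg) (S : Set (Evt Obj Val Rep Id)),
    t[i]? = some (IAct.recv r μ S) →
    ∃ j < i, ∃ r' : Rep, t[j]? = some (IAct.send r' μ S))

/-- A storage implementation. -/
structure Impl (Obj Val Rep Id : Type) : Type 1 where
  Msg : Type
  IState : Type
  ILoc : Type
  ilts : LTS IState (IAct Obj Val Rep Id Msg ILoc)
  wf : ∀ t, ilts.IsTrace t → TraceWF t

/-- Parallel composition of a program and a storage implementation: the implementation's
synchronized action `(e, m)` synchronizes with the program action `e`; all the other
actions interleave freely. -/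
def comp {Obj Val Rep Id : Type} (P : Program Obj Val Rep Id) (I : Impl Obj Val Rep Id) :
    LTS (P.PState × I.IState) (IAct Obj Val Rep Id I.Msg I.ILoc ⊕ P.PLoc) where
  start := (P.plts.start, I.ilts.start)
  delta := fun s a =>
    match a with
    | .inl (.sync e m) =>
      match P.plts.delta s.1 (.inl e), I.ilts.delta s.2 (.sync e m) with
      | some sp, some si => some (sp, si)
      | _, _ => none
    | .inl a' =>
      match I.ilts.delta s.2 a' with
      | some si => some (s.1, si)
      | none => none
    | .inr l =>
      match P.plts.delta s.1 (.inr l) with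
      | some sp => some (sp, s.2)
      | none => none

/-- Projection of a trace of the composition to a sequence of program actions. -/
def projP {Obj Val Rep Id : Type} (P : Program Obj Val Rep Id) (I : Impl Obj Val Rep Id)
    (t : List (IAct Obj Val Rep Id I.Msg I.ILoc ⊕ P.PLoc)) :
    List (Evt Obj Val Rep Id ⊕ P.PLoc) :=
  t.filterMap (fun a => match a with
    | .inl (.sync e _) => some (.inl e)
    | .inr l => some (.inr l)
    | _ => none)

/-- Replica of a program action. -/
def paRep {Obj Val Rep Id : Type} (P : Program Obj Val Rep Id) :
    (Evt Obj Val Rep Id ⊕ P.PLoc) → Rep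
  | .inl e => e.rep
  | .inr l => P.locRep l

/-- Replica of an action of the composition. -/
def caRep {Obj Val Rep Id : Type} (P : Program Obj Val Rep Id) (I : Impl Obj Val Rep Id) :
    (IAct Obj Val Rep Id I.Msg I.ILoc ⊕ P.PLoc) → Rep
  | .inl a => a.rep
  | .inr l => P.locRep l

/-- Replica `r` is waiting in the trace `t` of `P ∥ I` : the program can execute some
action at `r` after the projection of `t`, but every action of `r` enabled in `P ∥ I`
after `t` is a receive. -/
def Waiting {Obj Val Rep Id : Type} (P : Program Obj Val Rep Id) (I : Impl Obj Val Rep Id)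
    (t : List (IAct Obj Val Rep Id I.Msg I.ILoc ⊕ P.PLoc)) (r : Rep) : Prop :=
  (∃ (a : Evt Obj Val Rep Id ⊕ P.PLoc) (s : P.PState),
    paRep P a = r ∧ P.plts.run P.plts.start (projP P I t) = some s ∧
    (P.plts.delta s a).isSome) ∧
  (∀ (a : IAct Obj Val Rep Id I.Msg I.ILoc ⊕ P.PLoc) (s : P.PState × I.IState),
    caRep P I a = r → (comp P I).run (comp P I).start t = some s →
    ((comp P I).delta s a).isSome →
    match a with
    | .inl b => b.IsRecv
    | .inr _ => False)

/-- Availability of a storage implementation. -/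
def Impl.Available {Obj Val Rep Id : Type} (I : Impl Obj Val Rep Id) : Prop :=
  (∀ P : Program Obj Val Rep Id, P.plts.FiniteLTS → (comp P I).FiniteLTS) ∧
  (∀ P : Program Obj Val Rep Id, ∀ t, (comp P I).IsTrace t → ∀ r : Rep, ¬ Waiting P I t r)

/-! ## Induced histories and abstract executions of implementation traces -/

/-- `e` occurs (in a synchronized action) strictly before `e'` in the trace `t`. -/
def occursBefore {Obj Val Rep Id Msg Loc : Type} (t : List (IAct Obj Val Rep Id Msg Loc))
    (e e' : Evt Obj Val Rep Id) : Prop :=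
  ∃ i j : ℕ, i < j ∧ (∃ m, t[i]? = some (IAct.sync e m)) ∧ (∃ m, t[j]? = some (IAct.sync e' m))

/-- Session order induced by a trace (with a chosen initial event `ι`). -/
def inducedSo {Obj Val Rep Id Msg Loc : Type} (t : List (IAct Obj Val Rep Id Msg Loc))
    (ι : Evt Obj Val Rep Id) (e e' : Evt Obj Val Rep Id) : Prop :=
  (e = ι ∧ e' ≠ ι ∧ e' ∈ syncEvents t) ∨
  (e ∈ syncEvents t ∧ e' ∈ syncEvents t ∧ e.rep = e'.rep ∧ occursBefore t e e')

/-- Write-read dependencies induced by a trace. -/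
def inducedWr {Obj Val Rep Id Msg Loc : Type} (t : List (IAct Obj Val Rep Id Msg Loc))
    (x : Obj) (e : Evt Obj Val Rep Id) : Set (Evt Obj Val Rep Id) :=
  {w | ∃ (i : ℕ) (m : Obj → Set (Evt Obj Val Rep Id)), t[i]? = some (IAct.sync e m) ∧ w ∈ m x}

/-- Receive-before relation induced by a trace: the session order together with the
pairs `(e, e')` where `e` belongs to the `rcvSet` of a receive action at the replica of
`e'` occurring before (the synchronized action of) `e'`. -/
def inducedRb {Obj Val Rep Id Msg Loc : Type} (t : List (IAct Obj Val Rep Id Msg Loc))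
    (ι : Evt Obj Val Rep Id) (e e' : Evt Obj Val Rep Id) : Prop :=
  inducedSo t ι e e' ∨
  ∃ i j : ℕ, i < j ∧
    (∃ (μ : Msg) (S : Set (Evt Obj Val Rep Id)), t[i]? = some (IAct.recv e'.rep μ S) ∧ e ∈ S) ∧
    (∃ m, t[j]? = some (IAct.sync e' m))

/-- The abstract execution `ξ` is induced by the trace `t` : its history is the induced
history of `t`, its receive-before relation is the induced one, and its arbitration
order is any strict total order extending it (this is enforced by `AExec`). -/
def Induces {Obj Val Rep Id Msg Loc : Type} (t : List (IAct Obj Val Rep Id Msg Loc))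
    (ξ : AExec Obj Val Rep Id) : Prop :=
  ξ.init ∉ syncEvents t ∧
  ξ.E = insert ξ.init {e | e ∈ syncEvents t} ∧
  (∀ e e', ξ.so e e' ↔ inducedSo t ξ.init e e') ∧
  (∀ x e, ξ.wrInv x e = inducedWr t x e) ∧
  (∀ e e', ξ.rb e e' ↔ inducedRb t ξ.init e e')

/-- `I` is an implementation of a specification whose validity predicate is `Valid` :
every trace of `I` induces some abstract execution valid w.r.t. the specification. -/
def IsSpecImpl {Obj Val Rep Id : Type} (I : Impl Obj Val Rep Id)
    (Valid : AExec Obj Val Rep Id → Prop) : Prop :=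
  ∀ t, I.ilts.IsTrace t → ∃ ξ : AExec Obj Val Rep Id, Induces t ξ ∧ Valid ξ

/-! ## General visibility formulas (with conflict predicates) -/

/-- A visibility formula: a path of relation expressions together with a conjunction of
conflict predicates `conflict(E')` and `conflict_x(E')` over sets of its variables
(indices `0, …, rels.length`), with at least one conjunct `conflict_x(E')` containing
the first variable. -/
structure VisFormula : Type where
  rels : List RelExpr
  confl : Set (Finset ℕ)
  conflX : Set (Finset ℕ)
  confl_bdd : ∀ E' ∈ confl, ∀ i ∈ E', i ≤ rels.length
  conflX_bdd : ∀ E' ∈ conflX, ∀ i ∈ E', i ≤ rels.length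
  hasX0 : ∃ E' ∈ conflX, 0 ∈ E'

/-- `v.holdsOn ξ x es` : the visibility formula `v` holds in `ξ` at object `x` under
the instantiation `es` of its variables. -/
def VisFormula.holdsOn {Obj Val Rep Id : Type} (v : VisFormula) (ξ : AExec Obj Val Rep Id)
    (x : Obj) (es : ℕ → Evt Obj Val Rep Id) : Prop :=
  (∀ i, i ≤ v.rels.length → es i ∈ ξ.E) ∧
  (∀ (i : ℕ) (R : RelExpr), v.rels[i]? = some R → R.sem ξ (es i) (es (i + 1))) ∧
  ξ.wrInv x (es v.rels.length) ≠ ∅ ∧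
  (∀ E' ∈ v.confl, ∃ y : Obj, ∀ i ∈ E', ((es i).wval y).isSome) ∧
  (∀ E' ∈ v.conflX, ∀ i ∈ E', ((es i).wval x).isSome)

/-- `v.holds ξ x e₀ eₙ` : the visibility formula `v` relates `e₀` to `eₙ` on object
`x` in the abstract execution `ξ`. -/
def VisFormula.holds {Obj Val Rep Id : Type} (v : VisFormula) (ξ : AExec Obj Val Rep Id)
    (x : Obj) (e₀ eₙ : Evt Obj Val Rep Id) : Prop :=
  ∃ es : ℕ → Evt Obj Val Rep Id, es 0 = e₀ ∧ es v.rels.length = eₙ ∧ v.holdsOn ξ x es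

def VisFormula.SimpleForm (v : VisFormula) : Prop := ∀ r ∈ v.rels, r.Simple

def VisFormula.ArbFreeF (v : VisFormula) : Prop := ∀ r ∈ v.rels, r.ArFree

/-- The context (as a set of events) of event `r` for object `x` determined by a set
`F` of visibility formulas. -/
def gctxt {Obj Val Rep Id : Type} (F : Set VisFormula) (x : Obj) (ξ : AExec Obj Val Rep Id)
    (r : Evt Obj Val Rep Id) : Set (Evt Obj Val Rep Id) :=
  {e | e ∈ ξ.E ∧ ∃ v ∈ F, v.holds ξ x e r}

/-- A (general) consistency model: a set of visibility formulas whose denotations cover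
`so` and each `wr_x`. -/
structure CModG (Obj Val Rep Id : Type) : Type where
  formulas : Set VisFormula
  covers_so : ∃ v ∈ formulas, ∀ (ξ : AExec Obj Val Rep Id) (x : Obj) e e',
    ξ.so e e' → (e.wval x).isSome → ξ.wrInv x e' ≠ ∅ → v.holds ξ x e e'
  covers_wr : ∃ v ∈ formulas, ∀ (ξ : AExec Obj Val Rep Id) (x : Obj) e e',
    e ∈ ξ.wrInv x e' → (e.wval x).isSome → v.holds ξ x e e'

/-- `C₁` is weaker than `C₂`. -/
def GWeaker {Obj Val Rep Id : Type} (C₁ C₂ : CModG Obj Val Rep Id) : Prop :=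
  ∀ (ξ : AExec Obj Val Rep Id) (x : Obj) (e : Evt Obj Val Rep Id),
    gctxt C₁.formulas x ξ e ⊆ gctxt C₂.formulas x ξ e

/-! ## Contexts and general operation specifications -/

/-- A context: a finite set of events together with an asymmetric irreflexive
receive-before relation and a strict total arbitration order containing it. -/
structure Ctxt (Obj Val Rep Id : Type) : Type where
  E : Set (Evt Obj Val Rep Id)
  finE : E.Finite
  rb : Evt Obj Val Rep Id → Evt Obj Val Rep Id → Prop
  ar : Evt Obj Val Rep Id → Evt Obj Val Rep Id → Prop
  rb_dom : ∀ e e', rb e e' → e ∈ E ∧ e' ∈ E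
  rb_irrefl : ∀ e, ¬ rb e e
  rb_asymm : ∀ e e', rb e e' → ¬ rb e' e
  ar_dom : ∀ e e', ar e e' → e ∈ E ∧ e' ∈ E
  ar_irrefl : ∀ e, ¬ ar e e
  ar_trans : ∀ e₁ e₂ e₃, ar e₁ e₂ → ar e₂ e₃ → ar e₁ e₃
  ar_total : ∀ e ∈ E, ∀ e' ∈ E, e ≠ e' → ar e e' ∨ ar e' e
  rb_sub_ar : ∀ e e', rb e e' → ar e e'

/-- A (general) operation specification: events together with read, extract and write
specifications. -/
structure OpSpecG (Obj Val Rep Id : Type) : Type where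
  E : Set (Evt Obj Val Rep Id)
  rspec : Evt Obj Val Rep Id → Obj → Ctxt Obj Val Rep Id → Set (Evt Obj Val Rep Id)
  extract : Evt Obj Val Rep Id → Obj → Set (Evt Obj Val Rep Id × Val) → Option Val
  wspec : Evt Obj Val Rep Id → Obj → Val → Option Val
  rspec_wf : ∀ e x c, rspec e x c ⊆ c.E
  rspec_init : ∀ e : Evt Obj Val Rep Id, e.isInit = true → ∀ x c, rspec e x c = ∅
  rspec_uncond : ∀ e x, (∃ c, rspec e x c ≠ ∅) → ∀ c' : Ctxt Obj Val Rep Id,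
    c'.E ≠ ∅ → rspec e x c' ≠ ∅
  extract_init : ∀ e : Evt Obj Val Rep Id, e.isInit = true → ∀ x R, (extract e x R).isSome
  wspec_init : ∀ e : Evt Obj Val Rep Id, e.isInit = true → ∀ x u, (wspec e x u).isSome

/-- The context of `r` at `x` in `ξ` under the formulas `F`, as a `Ctxt`. -/
def execCtxt {Obj Val Rep Id : Type} (F : Set VisFormula) (x : Obj)
    (ξ : AExec Obj Val Rep Id) (r : Evt Obj Val Rep Id) : Ctxt Obj Val Rep Id where
  E := gctxt F x ξ r
  finE := ξ.finE.subset (fun _ he => he.1)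
  rb := fun a b => a ∈ gctxt F x ξ r ∧ b ∈ gctxt F x ξ r ∧ ξ.rb a b
  ar := fun a b => a ∈ gctxt F x ξ r ∧ b ∈ gctxt F x ξ r ∧ ξ.ar a b
  rb_dom := fun _ _ h => ⟨h.1, h.2.1⟩
  rb_irrefl := fun e h => ξ.rb_irrefl e h.2.2
  rb_asymm := fun _ _ h h' => ξ.rb_asymm _ _ h.2.2 h'.2.2
  ar_dom := fun _ _ h => ⟨h.1, h.2.1⟩
  ar_irrefl := fun e h => ξ.ar_irrefl e h.2.2
  ar_trans := fun _ _ _ h₁ h₂ => ⟨h₁.1, h₂.2.1, ξ.ar_trans _ _ _ h₁.2.2 h₂.2.2⟩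
  ar_total := fun e he e' he' hne =>
    (ξ.ar_total e he.1 e' he'.1 hne).imp (fun h => ⟨he, he', h⟩) (fun h => ⟨he', he, h⟩)
  rb_sub_ar := fun _ _ h => ⟨h.1, h.2.1, ξ.rb_sub_ar _ _ h.2.2⟩

/-- `rspec_{F,x}(ξ,e)`. -/
def rspecD {Obj Val Rep Id : Type} (F : Set VisFormula) (O : OpSpecG Obj Val Rep Id)
    (x : Obj) (ξ : AExec Obj Val Rep Id) (e : Evt Obj Val Rep Id) :
    Set (Evt Obj Val Rep Id) :=
  O.rspec e x (execCtxt F x ξ e)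

/-- `extract_{F,x}(ξ,e)`. -/
def extractD {Obj Val Rep Id : Type} (F : Set VisFormula) (O : OpSpecG Obj Val Rep Id)
    (x : Obj) (ξ : AExec Obj Val Rep Id) (e : Evt Obj Val Rep Id) : Option Val :=
  O.extract e x {p | p.1 ∈ rspecD F O x ξ e ∧ p.1.wval x = some p.2}

/-- `wspec_{F,x}(ξ,e)`. -/
def wspecD {Obj Val Rep Id : Type} (F : Set VisFormula) (O : OpSpecG Obj Val Rep Id)
    (x : Obj) (ξ : AExec Obj Val Rep Id) (e : Evt Obj Val Rep Id) : Option Val :=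
  (extractD F O x ξ e).bind (fun u => O.wspec e x u)

/-- Validity of an abstract execution w.r.t. a general storage specification. -/
def GValid {Obj Val Rep Id : Type} (F : Set VisFormula) (O : OpSpecG Obj Val Rep Id)
    (ξ : AExec Obj Val Rep Id) : Prop :=
  ξ.E ⊆ O.E ∧
  ∀ e ∈ ξ.E, ∀ x : Obj,
    ξ.wrInv x e = rspecD F O x ξ e ∧ e.wval x = wspecD F O x ξ e

/-! ## Maximally layered read specifications -/

/-- `l` is a chain (w.r.t. the strict order `lt`) inside `S` starting at `a` and ending
at a maximal element of `S`. -/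
def IsUpChain {α : Type} (lt : α → α → Prop) (S : Set α) (a : α) (l : List α) : Prop :=
  l ≠ [] ∧ l.head? = some a ∧ (∀ b ∈ l, b ∈ S) ∧ l.Chain' lt ∧
  (∀ b, l.getLast? = some b → ∀ c ∈ S, ¬ lt b c)

/-- `B` is the `k`-maximally layered subset of `S` w.r.t. `lt` : exactly the elements
of layer at most `k`, the layer of `a` being the size of the largest chain containing
`a` and a maximal element but no element below `a`. -/
def MaxLayered {α : Type} (lt : α → α → Prop) (S B : Set α) (k : ℕ) : Prop :=
  B = {a ∈ S | ∀ l, IsUpChain lt S a l → l.length ≤ k}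

namespace OpSpecG

variable {Obj Val Rep Id : Type}

/-- The read specification is `k`-maximally layered w.r.t. `ar`. -/
def MLayeredAr (O : OpSpecG Obj Val Rep Id) (k : ℕ) : Prop :=
  ∀ e x c, O.rspec e x c = ∅ ∨ MaxLayered c.ar c.E (O.rspec e x c) k

/-- The read specification is `k`-maximally layered w.r.t. `rb⁺`. -/
def MLayeredRb (O : OpSpecG Obj Val Rep Id) (k : ℕ) : Prop :=
  ∀ e x c, O.rspec e x c = ∅ ∨ MaxLayered (Relation.TransGen c.rb) c.E (O.rspec e x c) k

/-- The read specification is `∞`-maximally layered. -/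
def MLayeredInf (O : OpSpecG Obj Val Rep Id) : Prop :=
  ∀ e x c, O.rspec e x c = ∅ ∨ O.rspec e x c = c.E

/-- A maximally layered operation specification. -/
def MaximallyLayered (O : OpSpecG Obj Val Rep Id) : Prop :=
  (∃ k : ℕ, O.MLayeredAr k) ∨ (∃ k : ℕ, O.MLayeredRb k) ∨ O.MLayeredInf

/-- `e` is a read event of `O`. -/
def IsRead (O : OpSpecG Obj Val Rep Id) (e : Evt Obj Val Rep Id) : Prop :=
  ∃ x c, O.rspec e x c ≠ ∅

/-- `e` is a write event of `O`. -/
def IsWrite (O : OpSpecG Obj Val Rep Id) (e : Evt Obj Val Rep Id) : Prop :=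
  ∃ x u, (O.wspec e x u).isSome

def IsRW (O : OpSpecG Obj Val Rep Id) (e : Evt Obj Val Rep Id) : Prop :=
  O.IsRead e ∧ O.IsWrite e

/-- A conditional read-write event: a read event whose write specification is defined
for some arguments and undefined for others. -/
def IsCondRW (O : OpSpecG Obj Val Rep Id) (e : Evt Obj Val Rep Id) : Prop :=
  O.IsRead e ∧ (∃ x u, (O.wspec e x u).isSome) ∧ (∃ x u, O.wspec e x u = none)

/-- `D` is a domain of `O`. -/
def IsDomain (O : OpSpecG Obj Val Rep Id) (D : Set Obj) : Prop :=
  ∃ e ∈ O.E, e.isInit = false ∧ e.obj = D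

/-- The operation-closure assumptions about general operation specifications. -/
def ClosureWF (O : OpSpecG Obj Val Rep Id) : Prop :=
  -- initial events belong to the specification
  (∀ e : Evt Obj Val Rep Id, e.isInit = true → e ∈ O.E) ∧
  -- non-initial events access a finite set of objects
  (∀ e ∈ O.E, e.isInit = false → e.obj.Finite) ∧
  -- at least one read and one write event
  (∃ e ∈ O.E, O.IsRead e) ∧ (∃ e ∈ O.E, O.IsWrite e) ∧
  -- uniformity of operations across replicas and identifiers
  (∀ e ∈ O.E, e.isInit = false → ∀ (r : Rep) (i : Id), ∃ e' ∈ O.E,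
    e'.rep = r ∧ e'.ident = i ∧ e'.obj = e.obj ∧
    O.rspec e' = O.rspec e ∧ O.extract e' = O.extract e ∧ O.wspec e' = O.wspec e) ∧
  -- symmetric domains
  (∀ D : Set Obj, O.IsDomain D → ∀ x ∈ D, ∀ y, y ∉ D → O.IsDomain ((D \ {x}) ∪ {y})) ∧
  -- single-object read/write/read-write events exist for each object when they exist
  ((∃ e ∈ O.E, O.IsRead e ∧ ∃ x : Obj, e.obj = {x}) →
    ∀ x : Obj, ∃ e ∈ O.E, O.IsRead e ∧ e.obj = {x}) ∧
  ((∃ e ∈ O.E, O.IsWrite e ∧ ∃ x : Obj, e.obj = {x}) →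
    ∀ x : Obj, ∃ e ∈ O.E, O.IsWrite e ∧ e.obj = {x}) ∧
  ((∃ e ∈ O.E, O.IsRW e ∧ ∃ x : Obj, e.obj = {x}) →
    ∀ x : Obj, ∃ e ∈ O.E, O.IsRW e ∧ e.obj = {x}) ∧
  -- multi-object read/write/read-write events exist for every nonempty finite domain
  -- when some multi-object event of that kind exists
  ((∃ e ∈ O.E, O.IsRead e ∧ e.obj.Finite ∧ 2 ≤ e.obj.ncard) →
    ∀ D : Set Obj, D.Finite → D.Nonempty → ∃ e ∈ O.E, O.IsRead e ∧ e.obj = D) ∧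
  ((∃ e ∈ O.E, O.IsWrite e ∧ e.obj.Finite ∧ 2 ≤ e.obj.ncard) →
    ∀ D : Set Obj, D.Finite → D.Nonempty → ∃ e ∈ O.E, O.IsWrite e ∧ e.obj = D) ∧
  ((∃ e ∈ O.E, O.IsRW e ∧ e.obj.Finite ∧ 2 ≤ e.obj.ncard) →
    ∀ D : Set Obj, D.Finite → D.Nonempty → ∃ e ∈ O.E, O.IsRW e ∧ e.obj = D)

end OpSpecG

/-! ## Equivalence, vacuity, conflict-maximality, normal forms (general case) -/

/-- `F₁` and `F₂` are `O`-equivalent: exactly the same abstract executions over events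
of `O` are valid w.r.t. each. -/
def GEquiv {Obj Val Rep Id : Type} (O : OpSpecG Obj Val Rep Id)
    (F₁ F₂ : Set VisFormula) : Prop :=
  ∀ ξ : AExec Obj Val Rep Id, GValid F₁ O ξ ↔ GValid F₂ O ξ

/-- A visibility formula `v` is vacuous w.r.t. `(F, O)`. -/
def GVacuous {Obj Val Rep Id : Type} (F : Set VisFormula) (O : OpSpecG Obj Val Rep Id)
    (v : VisFormula) : Prop :=
  ∀ ξ : AExec Obj Val Rep Id, GValid F O ξ ↔ GValid (F \ {v}) O ξ

/-- `v'` is a conflict-strengthening of `v` : it replaces an occurrence of a conflict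
predicate by the same predicate over a strict superset, or removes a conjunct
`conflict(E')` when `conflict_x(E')` also occurs in `v`. -/
def Strengthening (v v' : VisFormula) : Prop :=
  v'.rels = v.rels ∧
  ((∃ E₁ E₂ : Finset ℕ, E₁ ∈ v.confl ∧ E₁ ⊂ E₂ ∧
      v'.confl = insert E₂ (v.confl \ {E₁}) ∧ v'.conflX = v.conflX) ∨
   (∃ E₁ E₂ : Finset ℕ, E₁ ∈ v.conflX ∧ E₁ ⊂ E₂ ∧
      v'.conflX = insert E₂ (v.conflX \ {E₁}) ∧ v'.confl = v.confl) ∨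
   (∃ E₁ : Finset ℕ, E₁ ∈ v.confl ∧ E₁ ∈ v.conflX ∧
      v'.confl = v.confl \ {E₁} ∧ v'.conflX = v.conflX))

/-- `v` is conflict-maximal w.r.t. `O` : no conflict-strengthening of `v` holds on all
instantiations of `v` in executions over events of `O`. -/
def ConflMaximal {Obj Val Rep Id : Type} (O : OpSpecG Obj Val Rep Id)
    (v : VisFormula) : Prop :=
  ¬ ∃ v' : VisFormula, Strengthening v v' ∧
    ∀ (ξ : AExec Obj Val Rep Id), ξ.E ⊆ O.E → ∀ (x : Obj) (es : ℕ → Evt Obj Val Rep Id),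
      v.holdsOn ξ x es → v'.holdsOn ξ x es

/-- A set of visibility formulas is in normal form w.r.t. `O` : all formulas are
simple and conflict-maximal, and none is vacuous. -/
def GInNormalForm {Obj Val Rep Id : Type} (O : OpSpecG Obj Val Rep Id)
    (F : Set VisFormula) : Prop :=
  ∀ v ∈ F, v.SimpleForm ∧ ConflMaximal O v ∧ ¬ GVacuous F O v

/-- A (general) consistency model is arbitration-free w.r.t. `O` if some `O`-equivalent
consistency model in normal form w.r.t. `O` consists of arbitration-free formulas. -/
def GArbFree {Obj Val Rep Id : Type} (C : CModG Obj Val Rep Id)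
    (O : OpSpecG Obj Val Rep Id) : Prop :=
  ∃ N : CModG Obj Val Rep Id, GInNormalForm O N.formulas ∧
    GEquiv O C.formulas N.formulas ∧ ∀ v ∈ N.formulas, v.ArbFreeF

/-! ## Causal suffixes -/

/-- The `ε_k`-suffix of a visibility formula `v` (for `k` in the union of its
`conflict_x`-sets): keeps the relations after position `k`, and intersects all
conflict predicates with the suffix variables. -/
def suffixAt (v : VisFormula) (k : ℕ) (hk : ∃ E' ∈ v.conflX, k ∈ E') : VisFormula where
  rels := v.rels.drop k
  confl :=
    (fun E' : Finset ℕ => (E'.filter (fun i => k ≤ i)).image (fun i => i - k)) '' v.confl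
  conflX :=
    (fun E' : Finset ℕ => (E'.filter (fun i => k ≤ i)).image (fun i => i - k)) '' v.conflX
  confl_bdd := by
    rintro E'' ⟨E', hE', rfl⟩ i hi
    simp only [Finset.mem_image, Finset.mem_filter] at hi
    obtain ⟨j, ⟨hj, hkj⟩, rfl⟩ := hi
    have hjb := v.confl_bdd E' hE' j hj
    simp only [List.length_drop]
    omega
  conflX_bdd := by
    rintro E'' ⟨E', hE', rfl⟩ i hi
    simp only [Finset.mem_image, Finset.mem_filter] at hi
    obtain ⟨j, ⟨hj, hkj⟩, rfl⟩ := hi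
    have hjb := v.conflX_bdd E' hE' j hj
    simp only [List.length_drop]
    omega
  hasX0 := by
    obtain ⟨E', hE', hkE'⟩ := hk
    refine ⟨_, ⟨E', hE', rfl⟩, ?_⟩
    simp only [Finset.mem_image, Finset.mem_filter]
    exact ⟨k, ⟨hkE', le_refl k⟩, Nat.sub_self k⟩

/-- Strength order on relation expressions: `rb` is stronger than `so` and `wr`, and
`ar` is stronger than `rb`, `so`, `wr`; extended compositionally. `RelLE r s` means
`s` is stronger than or equal to `r`. -/
inductive RelLE : RelExpr → RelExpr → Prop
  | refl (r : RelExpr) : RelLE r r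
  | so_rb : RelLE .rso .rrb
  | wr_rb : RelLE .rwr .rrb
  | so_ar : RelLE .rso .rar
  | wr_ar : RelLE .rwr .rar
  | rb_ar : RelLE .rrb .rar
  | runion {a b c d : RelExpr} : RelLE a c → RelLE b d → RelLE (.runion a b) (.runion c d)
  | rcomp {a b c d : RelExpr} : RelLE a c → RelLE b d → RelLE (.rcomp a b) (.rcomp c d)
  | rtc {a b : RelExpr} : RelLE a b → RelLE (.rtc a) (.rtc b)

/-- `v'` subsumes `v` : same length and each relation of `v'` is stronger than or equal
to the corresponding relation of `v`. -/
def Subsumes (v' v : VisFormula) : Prop :=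
  v'.rels.length = v.rels.length ∧
  ∀ (i : ℕ) (R R' : RelExpr), v.rels[i]? = some R → v'.rels[i]? = some R' → RelLE R R'

/-- A set of visibility formulas is closed under causal suffixes: for every formula
`v` and every `ε_k` in a `conflict_x`-set of `v` whose suffix is arbitration-free,
the set contains a formula subsuming that suffix. -/
def ClosedCausalSuffix (F : Set VisFormula) : Prop :=
  ∀ v ∈ F, ∀ (k : ℕ) (hk : ∃ E' ∈ v.conflX, k ∈ E'),
    (suffixAt v k hk).ArbFreeF → ∃ v' ∈ F, Subsumes v' (suffixAt v k hk)

/-! ## Corrections and execution-correctors -/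

/-- `ξ'` is the correction of `ξ` inserting the fresh event `a` as the immediate
receive-before and arbitration predecessor of `e` (and immediate session-order
predecessor of `e` when they are on the same replica), leaving the write-read
dependencies of the existing events unchanged. -/
structure IsCorrection {Obj Val Rep Id : Type} (ξ : AExec Obj Val Rep Id)
    (a e : Evt Obj Val Rep Id) (ξ' : AExec Obj Val Rep Id) : Prop where
  a_notin : a ∉ ξ.E
  e_mem : e ∈ ξ.E
  E_eq : ξ'.E = insert a ξ.E
  so_old : ∀ e₁ e₂, e₁ ∈ ξ.E → e₂ ∈ ξ.E → (ξ'.so e₁ e₂ ↔ ξ.so e₁ e₂)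
  ar_old : ∀ e₁ e₂, e₁ ∈ ξ.E → e₂ ∈ ξ.E → (ξ'.ar e₁ e₂ ↔ ξ.ar e₁ e₂)
  rb_old : ∀ e₁ e₂, e₁ ∈ ξ.E → e₂ ∈ ξ.E → (ξ'.rb e₁ e₂ ↔ ξ.rb e₁ e₂)
  wr_old : ∀ x e₁, e₁ ∈ ξ.E → ξ'.wrInv x e₁ = ξ.wrInv x e₁
  rb_a_e : ξ'.rb a e
  ar_below : ∀ b ∈ ξ.E, (ξ'.ar b a ↔ ξ.ar b e)
  ar_above : ∀ b ∈ ξ.E, (ξ'.ar a b ↔ (b = e ∨ ξ.ar e b))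
  so_same_rep : a.rep = e.rep →
    (∀ b ∈ ξ.E, (ξ'.so b a ↔ ξ.so b e)) ∧ (∀ b ∈ ξ.E, (ξ'.so a b ↔ (b = e ∨ ξ.so e b)))

/-- Correction of `ξ` with a sequence of fresh events (inserted, in order, immediately
before `e`). -/
inductive IsCorrectionSeq {Obj Val Rep Id : Type} (e : Evt Obj Val Rep Id) :
    AExec Obj Val Rep Id → List (Evt Obj Val Rep Id) → AExec Obj Val Rep Id → Prop
  | nil (ξ : AExec Obj Val Rep Id) : IsCorrectionSeq e ξ [] ξ
  | cons {ξ ξ₁ ξ₂ : AExec Obj Val Rep Id} {a : Evt Obj Val Rep Id}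
      {l : List (Evt Obj Val Rep Id)} :
      IsCorrection ξ a e ξ₁ → IsCorrectionSeq e ξ₁ l ξ₂ → IsCorrectionSeq e ξ (a :: l) ξ₂

/-- `ξ'` is `ξ ⊕ e` : `e` appended as the `ar`-maximal event. -/
structure IsAppend {Obj Val Rep Id : Type} (ξ : AExec Obj Val Rep Id)
    (e : Evt Obj Val Rep Id) (ξ' : AExec Obj Val Rep Id) : Prop where
  e_notin : e ∉ ξ.E
  E_eq : ξ'.E = insert e ξ.E
  so_old : ∀ e₁ e₂, e₁ ∈ ξ.E → e₂ ∈ ξ.E → (ξ'.so e₁ e₂ ↔ ξ.so e₁ e₂)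
  ar_old : ∀ e₁ e₂, e₁ ∈ ξ.E → e₂ ∈ ξ.E → (ξ'.ar e₁ e₂ ↔ ξ.ar e₁ e₂)
  rb_old : ∀ e₁ e₂, e₁ ∈ ξ.E → e₂ ∈ ξ.E → (ξ'.rb e₁ e₂ ↔ ξ.rb e₁ e₂)
  wr_old : ∀ x e₁, e₁ ∈ ξ.E → ξ'.wrInv x e₁ = ξ.wrInv x e₁
  ar_max : ∀ b ∈ ξ.E, ξ'.ar b e

/-- `ξ'` is `ξ` with the event `e` removed. -/
structure IsRemove {Obj Val Rep Id : Type} (ξ : AExec Obj Val Rep Id)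
    (e : Evt Obj Val Rep Id) (ξ' : AExec Obj Val Rep Id) : Prop where
  E_eq : ξ'.E = ξ.E \ {e}
  so_eq : ∀ e₁ e₂, e₁ ∈ ξ'.E → e₂ ∈ ξ'.E → (ξ'.so e₁ e₂ ↔ ξ.so e₁ e₂)
  ar_eq : ∀ e₁ e₂, e₁ ∈ ξ'.E → e₂ ∈ ξ'.E → (ξ'.ar e₁ e₂ ↔ ξ.ar e₁ e₂)
  rb_eq : ∀ e₁ e₂, e₁ ∈ ξ'.E → e₂ ∈ ξ'.E → (ξ'.rb e₁ e₂ ↔ ξ.rb e₁ e₂)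
  wr_eq : ∀ x e₁, e₁ ∈ ξ'.E → ξ'.wrInv x e₁ = ξ.wrInv x e₁

/-- `l` lists the values of the partial map `a` in increasing order of their
arguments. -/
def IsSeqOf {Obj Val Rep Id : Type} [LinearOrder Obj]
    (a : Obj → Option (Evt Obj Val Rep Id)) (l : List (Evt Obj Val Rep Id)) : Prop :=
  ∃ keys : List Obj, keys.Pairwise (· < ·) ∧ (∀ y, y ∈ keys ↔ (a y).isSome) ∧
    l = keys.filterMap a

/-- `a` is an execution-corrector for `(e, W, x, ξ)` w.r.t. the storage specification
`(F, O)`. -/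
def IsExecCorrector {Obj Val Rep Id : Type} [LinearOrder Obj] (F : Set VisFormula)
    (O : OpSpecG Obj Val Rep Id) (e : Evt Obj Val Rep Id) (W : Set Obj) (x : Obj)
    (ξ : AExec Obj Val Rep Id) (a : Obj → Option (Evt Obj Val Rep Id)) : Prop :=
  -- `a` is a partial map on `obj(e) ∖ {x}`
  (∀ y ey, a y = some ey → y ∈ e.obj ∧ y ≠ x) ∧
  -- (1) each corrector event writes exactly its assigned object, whenever the
  -- correction up to it (with `e` removed) is valid
  (∀ y ey, a y = some ey →
    ∀ l, IsSeqOf (fun z => if z ≤ y then a z else none) l →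
    ∀ ξ₁ ξ₂ : AExec Obj Val Rep Id, IsCorrectionSeq e ξ l ξ₁ → IsRemove ξ₁ e ξ₂ →
      GValid F O ξ₂ → ∀ z : Obj, ((wspecD F O z ξ₂ ey).isSome ↔ z = y)) ∧
  -- (2) in the (valid) full correction, `e` reads every object of its domain, and
  -- writes exactly the objects of `W`
  (∀ y ∈ e.obj, ∀ l, IsSeqOf a l → ∀ ξ' : AExec Obj Val Rep Id,
    IsCorrectionSeq e ξ l ξ' → GValid F O ξ' →
      (rspecD F O y ξ' e ≠ ∅ ∧ ((wspecD F O y ξ' e).isSome ↔ y ∈ W)))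

/-- The corrector assumption for the storage specification `(F, O)`. -/
def CorrectorAssumption {Obj Val Rep Id : Type} [LinearOrder Obj] (F : Set VisFormula)
    (O : OpSpecG Obj Val Rep Id) : Prop :=
  (∃ e ∈ O.E, O.IsCondRW e) →
  ∀ D : Set Obj, O.IsDomain D → ∀ W ⊆ D, ∀ x ∈ D, (W.Nonempty → x ∈ W) →
    ∀ ξ : AExec Obj Val Rep Id, ∃ e ∈ O.E, O.IsCondRW e ∧ e ∉ ξ.E ∧ e.obj = D ∧
      ∀ ξ' : AExec Obj Val Rep Id, IsAppend ξ e ξ' →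
        ∃ a : Obj → Option (Evt Obj Val Rep Id), IsExecCorrector F O e W x ξ' a

/-! ## Causal consistency (general version) -/

/-- The single visibility formula of causal consistency, as a general visibility
formula. -/
def ccVisG : VisFormula where
  rels := [RelExpr.rtc RelExpr.rrb]
  confl := ∅
  conflX := {{0}}
  confl_bdd := by intro E' hE'; exact absurd hE' (Set.notMem_empty E')
  conflX_bdd := by
    intro E' hE' i hi
    simp only [Set.mem_singleton_iff] at hE'
    subst hE'
    simp only [Finset.mem_singleton] at hi
    subst hi
    exact Nat.zero_le _
  hasX0 := ⟨{0}, rfl, Finset.mem_singleton_self 0⟩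

theorem ccVisG_holds {Obj Val Rep Id : Type} (ξ : AExec Obj Val Rep Id) (x : Obj)
    (e e' : Evt Obj Val Rep Id) (he : e ∈ ξ.E) (he' : e' ∈ ξ.E) (hrb : ξ.rb e e')
    (hw : (e.wval x).isSome) (hr : ξ.wrInv x e' ≠ ∅) :
    ccVisG.holds ξ x e e' := by
  refine ⟨fun i => if i = 0 then e else e', if_pos rfl, ?_, ?_, ?_, ?_, ?_, ?_⟩
  · show (if (1 : ℕ) = 0 then e else e') = e'
    simp
  · intro i _
    by_cases h : i = 0
    · simpa [h] using he
    · simpa [h] using he'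
  · intro i R hR
    have hi : i = 0 ∧ R = RelExpr.rtc RelExpr.rrb := by
      cases i with
      | zero =>
        simp only [ccVisG, List.getElem?_cons_zero, Option.some.injEq] at hR
        exact ⟨rfl, hR.symm⟩
      | succ n =>
        simp [ccVisG] at hR
    obtain ⟨h0, hReq⟩ := hi
    subst h0; subst hReq
    simpa [RelExpr.sem] using Relation.TransGen.single hrb
  · show ξ.wrInv x (if (1:ℕ) = 0 then e else e') ≠ ∅
    simpa using hr
  · intro E' hE'
    exact absurd hE' (Set.notMem_empty E')
  · intro E' hE' i hi
    simp only [ccVisG, Set.mem_singleton_iff] at hE'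
    subst hE'
    simp only [Finset.mem_singleton] at hi
    subst hi
    simpa using hw

/-- Causal consistency as a general consistency model. -/
def CCG (Obj Val Rep Id : Type) : CModG Obj Val Rep Id where
  formulas := {ccVisG}
  covers_so := by
    refine ⟨ccVisG, rfl, fun ξ x e e' hso hw hr => ?_⟩
    obtain ⟨he, he'⟩ := ξ.so_dom _ _ hso
    exact ccVisG_holds ξ x e e' he he' (ξ.so_sub_rb _ _ hso) hw hr
  covers_wr := by
    refine ⟨ccVisG, rfl, fun ξ x e e' hwr hw => ?_⟩
    have hne : ξ.wrInv x e' ≠ ∅ := by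
      intro h; rw [h] at hwr; exact hwr
    exact ccVisG_holds ξ x e e' (ξ.wr_dom _ _ _ hwr) (ξ.wr_reads_dom _ _ hne)
      (ξ.wr_sub_rb _ _ _ hwr) hw hne

theorem BasicVis.holds.wval_isSome {Obj Val Rep Id : Type} {v : BasicVis}
    {ξ : AExec Obj Val Rep Id} {x : Obj} {e₀ eₙ : Evt Obj Val Rep Id}
    (hv : v.holds ξ x e₀ eₙ) : (e₀.wval x).isSome := by
  obtain ⟨_, _, _, _, _, hw, _⟩ := hv
  exact hw

theorem wval_isSome_of_mem_bctxt {Obj Val Rep Id : Type} {F : Set BasicVis} {x : Obj}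
    {ξ : AExec Obj Val Rep Id} {w r : Evt Obj Val Rep Id} (hw : w ∈ bctxt F x ξ r) :
    (w.wval x).isSome := by
  obtain ⟨_, _, _, hv⟩ := hw
  exact hv.wval_isSome

theorem BasicCMod.mem_bctxt_of_mem_wrInv {Obj Val Rep Id : Type} (C : BasicCMod Obj Val Rep Id)
    {ξ : AExec Obj Val Rep Id} {x : Obj} {w r : Evt Obj Val Rep Id} (hwr : w ∈ ξ.wrInv x r)
    (hw : (w.wval x).isSome) : w ∈ bctxt C.formulas x ξ r := by
  obtain ⟨v, hvC, hcov⟩ := C.covers_wr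
  exact ⟨ξ.wr_dom x r w hwr, v, hvC, hcov ξ x w r hwr hw⟩

theorem valid_of_weaker_basic_general
    {Obj Val Rep Id : Type}
    (OpSpec : BasicOpSpec Obj Val Rep Id)
    (CMod₁ CMod₂ : BasicCMod Obj Val Rep Id) (h : BWeaker CMod₁ CMod₂)
    (ξ : AExec Obj Val Rep Id) (hv : BValid CMod₂.formulas OpSpec ξ) :
    BValid CMod₁.formulas OpSpec ξ := by
  obtain ⟨hE, hvalid⟩ := hv
  refine ⟨hE, fun e he x => ⟨fun hread => ?_, (hvalid e he x).2⟩⟩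
  obtain ⟨w, hw₂, hmax₂, hwr, hwval⟩ := (hvalid e he x).1 hread
  -- the `CMod₂`-maximum `w` is the write `e` reads, hence already in the smaller context
  have hw₁ : w ∈ bctxt CMod₁.formulas x ξ e :=
    CMod₁.mem_bctxt_of_mem_wrInv (hwr ▸ Set.mem_singleton w) (wval_isSome_of_mem_bctxt hw₂)
  exact ⟨w, hw₁, fun w' hw' hne => hmax₂ w' (h ξ x e hw') hne, hwr, hwval⟩

/-- Let `OpSpec` be a basic operation specification and `CMod₁ ≼ CMod₂` basic
consistency models.  Every abstract execution valid w.r.t. `(CMod₂, OpSpec)` is also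
valid w.r.t. `(CMod₁, OpSpec)`. -/
theorem valid_of_weaker_basic
    {Obj Val Rep Id : Type} [Infinite Obj] [Infinite Val]
    (OpSpec : BasicOpSpec Obj Val Rep Id) (hwf : OpSpec.WF)
    (CMod₁ CMod₂ : BasicCMod Obj Val Rep Id) (h : BWeaker CMod₁ CMod₂)
    (ξ : AExec Obj Val Rep Id) (hv : BValid CMod₂.formulas OpSpec ξ) :
    BValid CMod₁.formulas OpSpec ξ :=
  valid_of_weaker_basic_general OpSpec CMod₁ CMod₂ h ξ hv

end AFC
end

section
/- For every consistency model CMod there exists a consistency model CMod' in simple form (all of its visibility formulas simple, i.e. each of their relations is one of so, wr, rb, ar) that is equivalent to CMod: for every abstract execution ξ, every object x, and every event r, ctxt_{CMod,x}(ξ,r) = ctxt_{CMod',x}(ξ,r). -/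
namespace AFC

/-!
A relation expression is the union of its unfoldings: the paths of `so`, `wr`, `rb`, `ar`
obtained by choosing one branch of every union and unrolling every transitive closure
finitely often. Flattening a visibility formula along unfoldings of its relations, with its
conflict predicates moved to the segment boundaries, thus splits it into simple formulas
whose union is the original one. Take `CMod'` to be all simple formulas that entail some
formula of `CMod` in every execution: it contains these flattenings, so the contexts agree,
and it covers `so` and `wr` by the one-step formulas `so` and `wr`. The latter entails the
`wr`-covering formula of `CMod` because adding a `wr_y` edge `(e, r)` to `wr_x`, when `r`
already reads `x`, changes no denotation.
-/

section SimpleForm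

variable {Obj Val Rep Id : Type}

def IsPath (ξ : AExec Obj Val Rep Id) (L : List RelExpr) (es : ℕ → Evt Obj Val Rep Id) :
    Prop :=
  ∀ (i : ℕ) (R : RelExpr), L[i]? = some R → R.sem ξ (es i) (es (i + 1))

def pathSem (ξ : AExec Obj Val Rep Id) (L : List RelExpr) (a b : Evt Obj Val Rep Id) : Prop :=
  ∃ es : ℕ → Evt Obj Val Rep Id, es 0 = a ∧ es L.length = b ∧ IsPath ξ L es

def glue {α : Type} (n : ℕ) (f g : ℕ → α) : ℕ → α :=
  fun k => if k ≤ n then f k else g (k - n)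

lemma glue_of_le {α : Type} {n k : ℕ} (f g : ℕ → α) (hk : k ≤ n) : glue n f g k = f k :=
  if_pos hk

lemma glue_add {α : Type} {n : ℕ} {f g : ℕ → α} (h : f n = g 0) (k : ℕ) :
    glue n f g (n + k) = g k := by
  rcases k with _ | k
  · simpa [glue] using h
  · simp [glue]

lemma isPath_nil (ξ : AExec Obj Val Rep Id) (es : ℕ → Evt Obj Val Rep Id) :
    IsPath ξ [] es := by
  intro i R h
  simp at h

lemma isPath_append {ξ : AExec Obj Val Rep Id} {L₁ L₂ : List RelExpr}
    {es : ℕ → Evt Obj Val Rep Id} :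
    IsPath ξ (L₁ ++ L₂) es ↔
      IsPath ξ L₁ es ∧ IsPath ξ L₂ (fun k => es (L₁.length + k)) := by
  constructor
  · intro h
    refine ⟨fun i R hR => h i R ?_, fun i R hR => h (L₁.length + i) R ?_⟩
    · rwa [List.getElem?_append_left (List.getElem?_eq_some_iff.1 hR).1]
    · rwa [List.getElem?_append_right (by omega), Nat.add_sub_cancel_left]
  · rintro ⟨h₁, h₂⟩ i R hR
    by_cases hi : i < L₁.length
    · exact h₁ i R (by rwa [List.getElem?_append_left hi] at hR)
    · obtain ⟨k, rfl⟩ := Nat.exists_eq_add_of_le (not_lt.1 hi)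
      rw [List.getElem?_append_right (by omega), Nat.add_sub_cancel_left] at hR
      exact h₂ k R hR

lemma isPath_cons {ξ : AExec Obj Val Rep Id} {R : RelExpr} {L : List RelExpr}
    {es : ℕ → Evt Obj Val Rep Id} :
    IsPath ξ (R :: L) es ↔ R.sem ξ (es 0) (es 1) ∧ IsPath ξ L (fun k => es (k + 1)) := by
  rw [← List.singleton_append, isPath_append]
  refine and_congr ⟨fun h => h 0 R rfl, fun h i R' hR' => ?_⟩
    (by simp only [List.length_singleton, Nat.add_comm 1])
  rcases i with _ | i
  · cases hR'; exact h
  · simp at hR'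

lemma IsPath.append {ξ : AExec Obj Val Rep Id} {L₁ L₂ : List RelExpr}
    {f g : ℕ → Evt Obj Val Rep Id} (hf : IsPath ξ L₁ f) (hg : IsPath ξ L₂ g)
    (h : f L₁.length = g 0) : IsPath ξ (L₁ ++ L₂) (glue L₁.length f g) := by
  refine isPath_append.2 ⟨fun i R hR => ?_, by simpa only [glue_add h] using hg⟩
  have hi := (List.getElem?_eq_some_iff.1 hR).1
  rw [glue_of_le _ _ hi.le, glue_of_le _ _ hi]
  exact hf i R hR

lemma pathSem_nil {ξ : AExec Obj Val Rep Id} {a b : Evt Obj Val Rep Id} :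
    pathSem ξ [] a b ↔ a = b :=
  ⟨fun ⟨_, h₀, h₁, _⟩ => h₀.symm.trans h₁,
    fun h => ⟨fun _ => a, rfl, h, isPath_nil ξ _⟩⟩

lemma pathSem_singleton {ξ : AExec Obj Val Rep Id} {R : RelExpr} {a b : Evt Obj Val Rep Id} :
    pathSem ξ [R] a b ↔ R.sem ξ a b := by
  constructor
  · rintro ⟨es, rfl, rfl, h⟩
    exact h 0 R rfl
  · intro h
    exact ⟨fun k => if k = 0 then a else b, rfl, rfl, isPath_cons.2 ⟨h, isPath_nil ξ _⟩⟩

lemma pathSem_append {ξ : AExec Obj Val Rep Id} {L₁ L₂ : List RelExpr}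
    {a b : Evt Obj Val Rep Id} :
    pathSem ξ (L₁ ++ L₂) a b ↔ ∃ c, pathSem ξ L₁ a c ∧ pathSem ξ L₂ c b := by
  constructor
  · rintro ⟨es, rfl, rfl, h⟩
    obtain ⟨h₁, h₂⟩ := isPath_append.1 h
    exact ⟨_, ⟨es, rfl, rfl, h₁⟩, ⟨_, rfl, by simp, h₂⟩⟩
  · rintro ⟨c, ⟨f, rfl, rfl, hf⟩, ⟨g, hg₀, rfl, hg⟩⟩
    refine ⟨glue L₁.length f g, glue_of_le _ _ (Nat.zero_le _), ?_, hf.append hg hg₀.symm⟩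
    rw [List.length_append, glue_add hg₀.symm]

lemma RelExpr.Simple.mem_of_sem {ξ : AExec Obj Val Rep Id} {R : RelExpr} (hR : R.Simple)
    {a b : Evt Obj Val Rep Id} (h : R.sem ξ a b) : b ∈ ξ.E := by
  cases R with
  | rso => exact (ξ.so_dom a b h).2
  | rwr =>
    obtain ⟨y, hy⟩ := h
    exact ξ.wr_reads_dom y b (Set.nonempty_iff_ne_empty.1 ⟨a, hy⟩)
  | rrb => exact (ξ.rb_dom a b h).2
  | rar => exact (ξ.ar_dom a b h).2
  | _ => exact hR.elim

lemma IsPath.mem_of_simple {ξ : AExec Obj Val Rep Id} {L : List RelExpr}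
    {es : ℕ → Evt Obj Val Rep Id} (h : IsPath ξ L es) (hL : ∀ R ∈ L, R.Simple)
    (h₀ : es 0 ∈ ξ.E) : ∀ i ≤ L.length, es i ∈ ξ.E
  | 0, _ => h₀
  | i + 1, hi =>
    have hR : L[i]? = some L[i] := List.getElem?_eq_getElem (by omega)
    (hL _ (List.getElem_mem _)).mem_of_sem (h i _ hR)

/-- `L` is a path of simple relations obtained from `R` by choosing a branch of each union
and unrolling each transitive closure finitely often; `R` is the union of these paths. -/
inductive RelExpr.Unfolding : RelExpr → List RelExpr → Prop
  | id : Unfolding .rid []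
  | so : Unfolding .rso [.rso]
  | wr : Unfolding .rwr [.rwr]
  | rb : Unfolding .rrb [.rrb]
  | ar : Unfolding .rar [.rar]
  | unionL {r s L} : Unfolding r L → Unfolding (.runion r s) L
  | unionR {r s L} : Unfolding s L → Unfolding (.runion r s) L
  | comp {r s L₁ L₂} :
      Unfolding r L₁ → Unfolding s L₂ → Unfolding (.rcomp r s) (L₁ ++ L₂)
  | tc_single {r L} : Unfolding r L → Unfolding (.rtc r) L
  | tc_tail {r L₁ L₂} :
      Unfolding (.rtc r) L₁ → Unfolding r L₂ → Unfolding (.rtc r) (L₁ ++ L₂)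

namespace RelExpr.Unfolding

lemma simple {R : RelExpr} {L : List RelExpr} (h : Unfolding R L) : ∀ S ∈ L, S.Simple := by
  induction h with
  | id | so | wr | rb | ar => simp [RelExpr.Simple]
  | unionL _ ih | unionR _ ih | tc_single _ ih => exact ih
  | comp _ _ ih₁ ih₂ | tc_tail _ _ ih₁ ih₂ =>
    intro S hS
    exact (List.mem_append.1 hS).elim (ih₁ S) (ih₂ S)

lemma sem_of_pathSem {ξ : AExec Obj Val Rep Id} {R : RelExpr} {L : List RelExpr}
    (h : Unfolding R L) {a b : Evt Obj Val Rep Id} (hp : pathSem ξ L a b) : R.sem ξ a b := by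
  induction h generalizing a b with
  | id => exact pathSem_nil.1 hp
  | so | wr | rb | ar => exact pathSem_singleton.1 hp
  | unionL _ ih => exact Or.inl (ih hp)
  | unionR _ ih => exact Or.inr (ih hp)
  | comp _ _ ih₁ ih₂ =>
    obtain ⟨c, hp₁, hp₂⟩ := pathSem_append.1 hp
    exact ⟨c, ih₁ hp₁, ih₂ hp₂⟩
  | tc_single _ ih => exact Relation.TransGen.single (ih hp)
  | tc_tail _ _ ih₁ ih₂ =>
    obtain ⟨c, hp₁, hp₂⟩ := pathSem_append.1 hp
    exact Relation.TransGen.tail (ih₁ hp₁) (ih₂ hp₂)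

lemma exists_of_sem {ξ : AExec Obj Val Rep Id} (R : RelExpr) {a b : Evt Obj Val Rep Id}
    (h : R.sem ξ a b) : ∃ L, Unfolding R L ∧ pathSem ξ L a b := by
  induction R generalizing a b with
  | rid => exact ⟨[], .id, pathSem_nil.2 h⟩
  | rso => exact ⟨_, .so, pathSem_singleton.2 h⟩
  | rwr => exact ⟨_, .wr, pathSem_singleton.2 h⟩
  | rrb => exact ⟨_, .rb, pathSem_singleton.2 h⟩
  | rar => exact ⟨_, .ar, pathSem_singleton.2 h⟩
  | runion r s ihr ihs =>
    rcases h with h | h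
    · obtain ⟨L, hL, hp⟩ := ihr h
      exact ⟨L, .unionL hL, hp⟩
    · obtain ⟨L, hL, hp⟩ := ihs h
      exact ⟨L, .unionR hL, hp⟩
  | rcomp r s ihr ihs =>
    obtain ⟨c, h₁, h₂⟩ := h
    obtain ⟨L₁, hL₁, hp₁⟩ := ihr h₁
    obtain ⟨L₂, hL₂, hp₂⟩ := ihs h₂
    exact ⟨_, .comp hL₁ hL₂, pathSem_append.2 ⟨c, hp₁, hp₂⟩⟩
  | rtc r ihr =>
    induction h with
    | single h =>
      obtain ⟨L, hL, hp⟩ := ihr h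
      exact ⟨L, .tc_single hL, hp⟩
    | tail _ h₂ ih =>
      obtain ⟨L₁, hL₁, hp₁⟩ := ih
      obtain ⟨L₂, hL₂, hp₂⟩ := ihr h₂
      exact ⟨_, .tc_tail hL₁ hL₂, pathSem_append.2 ⟨_, hp₁, hp₂⟩⟩

end RelExpr.Unfolding

open RelExpr (Unfolding)

def segmentStart (Ls : List (List RelExpr)) (i : ℕ) : ℕ :=
  (Ls.take i).flatten.length

@[simp]
lemma segmentStart_cons_succ (L : List RelExpr) (Ls : List (List RelExpr)) (i : ℕ) :
    segmentStart (L :: Ls) (i + 1) = L.length + segmentStart Ls i := by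
  simp [segmentStart]

lemma segmentStart_le (Ls : List (List RelExpr)) (i : ℕ) :
    segmentStart Ls i ≤ Ls.flatten.length :=
  ((List.take_prefix i Ls).flatten).length_le

lemma segmentStart_length (Ls : List (List RelExpr)) :
    segmentStart Ls Ls.length = Ls.flatten.length := by
  simp [segmentStart]

lemma simple_of_forall₂_unfolding {L : List RelExpr} {Ls : List (List RelExpr)}
    (h : List.Forall₂ Unfolding L Ls) : ∀ S ∈ Ls.flatten, S.Simple := by
  induction h with
  | nil => simp
  | cons hR _ ih =>
    intro S hS
    exact (List.mem_append.1 hS).elim (hR.simple S) (ih S)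

lemma IsPath.of_flatten {ξ : AExec Obj Val Rep Id} {L : List RelExpr}
    {Ls : List (List RelExpr)} (h : List.Forall₂ Unfolding L Ls)
    {es : ℕ → Evt Obj Val Rep Id} (hp : IsPath ξ Ls.flatten es) :
    IsPath ξ L (es ∘ segmentStart Ls) := by
  induction h generalizing es with
  | nil => exact isPath_nil ξ _
  | cons hR _ ih =>
    obtain ⟨hp₀, hp⟩ := isPath_append.1 hp
    refine isPath_cons.2 ⟨?_, by simpa [Function.comp_def] using ih hp⟩
    simpa [segmentStart] using hR.sem_of_pathSem ⟨es, rfl, rfl, hp₀⟩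

lemma IsPath.exists_flatten {ξ : AExec Obj Val Rep Id} {L : List RelExpr}
    {es : ℕ → Evt Obj Val Rep Id} (hp : IsPath ξ L es) :
    ∃ (Ls : List (List RelExpr)) (es' : ℕ → Evt Obj Val Rep Id),
      List.Forall₂ Unfolding L Ls ∧ IsPath ξ Ls.flatten es' ∧
        ∀ i ≤ L.length, es' (segmentStart Ls i) = es i := by
  induction L generalizing es with
  | nil =>
    exact ⟨[], es, .nil, isPath_nil ξ es, fun i hi => by obtain rfl := Nat.le_zero.1 hi; rfl⟩
  | cons R L ih =>
    obtain ⟨hR, hp⟩ := isPath_cons.1 hp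
    obtain ⟨L₀, hL₀, f, hf₀, hf₁, hf⟩ := Unfolding.exists_of_sem R hR
    obtain ⟨Ls, g, hLs, hg, hgs⟩ := ih hp
    have hfg : f L₀.length = g 0 := hf₁.trans (hgs 0 (Nat.zero_le _)).symm
    refine ⟨L₀ :: Ls, glue L₀.length f g, .cons hL₀ hLs, hf.append hg hfg, ?_⟩
    rintro (_ | i) hi
    · exact (glue_of_le _ _ (Nat.zero_le _)).trans hf₀
    · rw [segmentStart_cons_succ, glue_add hfg]
      exact hgs i (by simpa using hi)

namespace VisFormula

/-- The formula whose relations are the concatenation of `Ls` (intended: unfoldings of the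
relations of `v`), with the conflict predicates of `v` moved to the segment boundaries. -/
def flatten (v : VisFormula) (Ls : List (List RelExpr)) : VisFormula where
  rels := Ls.flatten
  confl := (Finset.image (segmentStart Ls)) '' v.confl
  conflX := (Finset.image (segmentStart Ls)) '' v.conflX
  confl_bdd := by
    rintro _ ⟨E', -, rfl⟩ i hi
    obtain ⟨j, -, rfl⟩ := Finset.mem_image.1 hi
    exact segmentStart_le Ls j
  conflX_bdd := by
    rintro _ ⟨E', -, rfl⟩ i hi
    obtain ⟨j, -, rfl⟩ := Finset.mem_image.1 hi
    exact segmentStart_le Ls j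
  hasX0 := by
    obtain ⟨E', hE', h0⟩ := v.hasX0
    exact ⟨_, ⟨E', hE', rfl⟩, Finset.mem_image.2 ⟨0, h0, rfl⟩⟩

lemma flatten_simpleForm {v : VisFormula} {Ls : List (List RelExpr)}
    (h : List.Forall₂ Unfolding v.rels Ls) : (v.flatten Ls).SimpleForm :=
  simple_of_forall₂_unfolding h

lemma holds_of_flatten_holds {v : VisFormula} {Ls : List (List RelExpr)}
    (h : List.Forall₂ Unfolding v.rels Ls) {ξ : AExec Obj Val Rep Id} {x : Obj}
    {e r : Evt Obj Val Rep Id} (hv : (v.flatten Ls).holds ξ x e r) : v.holds ξ x e r := by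
  obtain ⟨es, rfl, rfl, hmem, hp, hwr, hconfl, hconflX⟩ := hv
  have htop : segmentStart Ls v.rels.length = Ls.flatten.length := by
    rw [h.length_eq, segmentStart_length]
  refine ⟨es ∘ segmentStart Ls, rfl, congrArg es htop, ⟨fun i _ => hmem _ ?_,
    IsPath.of_flatten h hp, ?_, fun E' hE' => ?_, fun E' hE' i hi => ?_⟩⟩
  · exact segmentStart_le Ls i
  · show ξ.wrInv x (es (segmentStart Ls v.rels.length)) ≠ ∅
    rwa [htop]
  · obtain ⟨y, hy⟩ := hconfl _ ⟨E', hE', rfl⟩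
    exact ⟨y, fun i hi => hy _ (Finset.mem_image_of_mem _ hi)⟩
  · exact hconflX _ ⟨E', hE', rfl⟩ _ (Finset.mem_image_of_mem _ hi)

lemma exists_flatten_holds {v : VisFormula} {ξ : AExec Obj Val Rep Id} {x : Obj}
    {e r : Evt Obj Val Rep Id} (hv : v.holds ξ x e r) :
    ∃ Ls, List.Forall₂ Unfolding v.rels Ls ∧ (v.flatten Ls).holds ξ x e r := by
  obtain ⟨es, rfl, rfl, hmem, hp, hwr, hconfl, hconflX⟩ := hv
  obtain ⟨Ls, es', hLs, hp', hes'⟩ := IsPath.exists_flatten hp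
  have h₀ : es' 0 = es 0 := hes' 0 (Nat.zero_le _)
  have htop : es' Ls.flatten.length = es v.rels.length := by
    rw [← segmentStart_length, ← hLs.length_eq, hes' _ le_rfl]
  refine ⟨Ls, hLs, es', h₀, htop, ⟨?_, hp', ?_, ?_, ?_⟩⟩
  · exact IsPath.mem_of_simple hp' (simple_of_forall₂_unfolding hLs)
      (h₀ ▸ hmem 0 (Nat.zero_le _))
  · show ξ.wrInv x (es' Ls.flatten.length) ≠ ∅
    rwa [htop]
  · rintro _ ⟨E', hE', rfl⟩
    obtain ⟨y, hy⟩ := hconfl E' hE'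
    refine ⟨y, fun _ hj => ?_⟩
    obtain ⟨i, hi, rfl⟩ := Finset.mem_image.1 hj
    rw [hes' i (v.confl_bdd E' hE' i hi)]
    exact hy i hi
  · rintro _ ⟨E', hE', rfl⟩ _ hj
    obtain ⟨i, hi, rfl⟩ := Finset.mem_image.1 hj
    rw [hes' i (v.conflX_bdd E' hE' i hi)]
    exact hconflX E' hE' i hi

/-- The formula `R_x(e₀, e₁)` with the single conflict predicate `conflict_x({e₀})`. -/
def single (R : RelExpr) : VisFormula where
  rels := [R]
  confl := ∅
  conflX := {{0}}
  confl_bdd := by simp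
  conflX_bdd := by simp
  hasX0 := ⟨{0}, rfl, Finset.mem_singleton_self 0⟩

lemma single_holds_iff {R : RelExpr} {ξ : AExec Obj Val Rep Id} {x : Obj}
    {e r : Evt Obj Val Rep Id} :
    (single R).holds ξ x e r ↔
      e ∈ ξ.E ∧ r ∈ ξ.E ∧ R.sem ξ e r ∧ (e.wval x).isSome ∧ ξ.wrInv x r ≠ ∅ := by
  constructor
  · rintro ⟨es, rfl, rfl, hmem, hp, hwr, -, hconflX⟩
    exact ⟨hmem 0 (by simp [single]), hmem 1 (by simp [single]), hp 0 R rfl,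
      hconflX {0} rfl 0 (Finset.mem_singleton_self 0), hwr⟩
  · rintro ⟨he, hr, hR, hw, hwr⟩
    refine ⟨fun k => if k = 0 then e else r, rfl, rfl, ?_, ?_, hwr, by simp [single], ?_⟩
    · intro i _
      rcases i with _ | i <;> simpa
    · exact isPath_cons.2 ⟨hR, isPath_nil ξ _⟩
    · simp [single, hw]

end VisFormula

/-- Since `e` already `wr`-precedes `r` on some object and `r` already reads `x`, adding `e`
to the events read by `r` on `x` leaves the relation `wr`, and so every denotation, unchanged. -/
def AExec.addWr (ξ : AExec Obj Val Rep Id) (x : Obj) (e r : Evt Obj Val Rep Id)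
    (hwr : ∃ y, e ∈ ξ.wrInv y r) (hx : ξ.wrInv x r ≠ ∅) : AExec Obj Val Rep Id :=
  { ξ with
    wrInv := fun z q => {w | w ∈ ξ.wrInv z q ∨ (w = e ∧ z = x ∧ q = r)}
    wr_dom := by
      rintro z q w (hw | ⟨rfl, rfl, rfl⟩)
      · exact ξ.wr_dom z q w hw
      · exact ξ.wr_dom _ _ _ hwr.choose_spec
    wr_reads_dom := by
      intro z q hne
      obtain ⟨w, hw | ⟨rfl, rfl, rfl⟩⟩ := Set.nonempty_iff_ne_empty.2 hne
      · exact ξ.wr_reads_dom z q (Set.nonempty_iff_ne_empty.1 ⟨w, hw⟩)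
      · exact ξ.wr_reads_dom _ _ hx
    acyclic := by
      intro a h
      refine ξ.acyclic a (Relation.TransGen.mono ?_ _ _ h)
      rintro a' b' (hso | ⟨z, hz | ⟨rfl, rfl, rfl⟩⟩)
      · exact Or.inl hso
      · exact Or.inr ⟨z, hz⟩
      · exact Or.inr hwr
    wr_sub_rb := by
      rintro z w q (hw | ⟨rfl, rfl, rfl⟩)
      · exact ξ.wr_sub_rb z w q hw
      · exact ξ.wr_sub_rb _ _ _ hwr.choose_spec }

lemma RelExpr.sem_addWr {ξ : AExec Obj Val Rep Id} {x : Obj} {e r : Evt Obj Val Rep Id}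
    (hwr : ∃ y, e ∈ ξ.wrInv y r) (hx : ξ.wrInv x r ≠ ∅) (R : RelExpr) :
    R.sem (ξ.addWr x e r hwr hx) = R.sem ξ := by
  induction R with
  | rid | rso | rrb | rar => rfl
  | rwr =>
    ext a b
    constructor
    · rintro ⟨z, hz | ⟨rfl, rfl, rfl⟩⟩
      exacts [⟨z, hz⟩, hwr]
    · rintro ⟨z, hz⟩
      exact ⟨z, Or.inl hz⟩
  | runion _ _ ih₁ ih₂ | rcomp _ _ ih₁ ih₂ => simp only [RelExpr.sem, ih₁, ih₂]
  | rtc _ ih => simp only [RelExpr.sem, ih]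

lemma VisFormula.holds_of_holds_addWr {ξ : AExec Obj Val Rep Id} {x : Obj}
    {e r : Evt Obj Val Rep Id} (hwr : ∃ y, e ∈ ξ.wrInv y r) (hx : ξ.wrInv x r ≠ ∅)
    {v : VisFormula} {z : Obj} {a b : Evt Obj Val Rep Id}
    (h : v.holds (ξ.addWr x e r hwr hx) z a b) : v.holds ξ z a b := by
  obtain ⟨es, h₀, h₁, hmem, hp, hwr', hconfl, hconflX⟩ := h
  refine ⟨es, h₀, h₁, hmem, fun i R hR => ?_, ?_, hconfl, hconflX⟩
  · simpa only [RelExpr.sem_addWr] using hp i R hR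
  · obtain ⟨w, hw | ⟨-, rfl, hq⟩⟩ := Set.nonempty_iff_ne_empty.2 hwr'
    · exact Set.nonempty_iff_ne_empty.1 ⟨w, hw⟩
    · rwa [hq]

namespace CModG

def simpleEntailed (C : CModG Obj Val Rep Id) : Set VisFormula :=
  {w | w.SimpleForm ∧ ∀ (ξ : AExec Obj Val Rep Id) (x : Obj) (e r : Evt Obj Val Rep Id),
    w.holds ξ x e r → ∃ v ∈ C.formulas, v.holds ξ x e r}

lemma single_so_mem_simpleEntailed (C : CModG Obj Val Rep Id) :
    VisFormula.single .rso ∈ C.simpleEntailed := by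
  obtain ⟨v, hv, hcov⟩ := C.covers_so
  refine ⟨by simp [VisFormula.single, VisFormula.SimpleForm, RelExpr.Simple], ?_⟩
  intro ξ x e r h
  obtain ⟨-, -, hso, hw, hx⟩ := VisFormula.single_holds_iff.1 h
  exact ⟨v, hv, hcov ξ x e r hso hw hx⟩

/-- A `wr_y` edge into an event reading `x` is a `wr_x` edge of `ξ.addWr`. -/
lemma single_wr_mem_simpleEntailed (C : CModG Obj Val Rep Id) :
    VisFormula.single .rwr ∈ C.simpleEntailed := by
  obtain ⟨v, hv, hcov⟩ := C.covers_wr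
  refine ⟨by simp [VisFormula.single, VisFormula.SimpleForm, RelExpr.Simple], ?_⟩
  intro ξ x e r h
  obtain ⟨-, -, hwr, hw, hx⟩ := VisFormula.single_holds_iff.1 h
  exact ⟨v, hv, VisFormula.holds_of_holds_addWr hwr hx
    (hcov (ξ.addWr x e r hwr hx) x e r (Or.inr ⟨rfl, rfl, rfl⟩) hw)⟩

lemma flatten_mem_simpleEntailed (C : CModG Obj Val Rep Id) {v : VisFormula}
    (hv : v ∈ C.formulas) {Ls : List (List RelExpr)} (h : List.Forall₂ Unfolding v.rels Ls) :
    v.flatten Ls ∈ C.simpleEntailed :=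
  ⟨VisFormula.flatten_simpleForm h,
    fun _ _ _ _ hw => ⟨v, hv, VisFormula.holds_of_flatten_holds h hw⟩⟩

def simplification (C : CModG Obj Val Rep Id) : CModG Obj Val Rep Id where
  formulas := C.simpleEntailed
  covers_so := by
    refine ⟨_, C.single_so_mem_simpleEntailed, fun ξ x e e' hso hw hx => ?_⟩
    exact VisFormula.single_holds_iff.2
      ⟨(ξ.so_dom e e' hso).1, (ξ.so_dom e e' hso).2, hso, hw, hx⟩
  covers_wr := by
    refine ⟨_, C.single_wr_mem_simpleEntailed, fun ξ x e e' hwr hw => ?_⟩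
    have hx : ξ.wrInv x e' ≠ ∅ := Set.nonempty_iff_ne_empty.1 ⟨e, hwr⟩
    exact VisFormula.single_holds_iff.2
      ⟨ξ.wr_dom x e' e hwr, ξ.wr_reads_dom x e' hx, ⟨x, hwr⟩, hw, hx⟩

lemma gctxt_simplification (C : CModG Obj Val Rep Id) (ξ : AExec Obj Val Rep Id) (x : Obj)
    (r : Evt Obj Val Rep Id) :
    gctxt C.formulas x ξ r = gctxt C.simplification.formulas x ξ r := by
  ext e
  constructor
  · rintro ⟨he, v, hv, h⟩
    obtain ⟨Ls, hLs, hflat⟩ := VisFormula.exists_flatten_holds h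
    exact ⟨he, _, C.flatten_mem_simpleEntailed hv hLs, hflat⟩
  · rintro ⟨he, w, ⟨-, hw⟩, h⟩
    exact ⟨he, hw ξ x e r h⟩

end CModG

end SimpleForm

theorem exists_simple_form_general
    {Obj Val Rep Id : Type}
    (CMod : CModG Obj Val Rep Id) :
    ∃ CMod' : CModG Obj Val Rep Id, (∀ v ∈ CMod'.formulas, v.SimpleForm) ∧
      ∀ (ξ : AExec Obj Val Rep Id) (x : Obj) (r : Evt Obj Val Rep Id),
        gctxt CMod.formulas x ξ r = gctxt CMod'.formulas x ξ r :=
  ⟨CMod.simplification, fun _ hw => hw.1, CMod.gctxt_simplification⟩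

/-- For every consistency model `CMod` there exists a consistency model in simple form
that is equivalent to `CMod` (same contexts in every abstract execution). -/
theorem exists_simple_form
    {Obj Val Rep Id : Type} [Infinite Obj] [Infinite Val]
    (CMod : CModG Obj Val Rep Id) :
    ∃ CMod' : CModG Obj Val Rep Id, (∀ v ∈ CMod'.formulas, v.SimpleForm) ∧
      ∀ (ξ : AExec Obj Val Rep Id) (x : Obj) (r : Evt Obj Val Rep Id),
        gctxt CMod.formulas x ξ r = gctxt CMod'.formulas x ξ r :=
  exists_simple_form_general CMod

end AFC
end

section
/- Let OpSpec be a maximally layered operation specification, let CMod be a consistency model in normal form w.r.t. OpSpec, and let v be a visibility formula in CMod. If there exist an abstract execution ξ = ⟨h, rb, ar⟩ valid w.r.t. (CMod, OpSpec), an object x, and events w, r such that v_x(w, r) holds in ξ but (w, r) ∉ rb⁺, then the read specification of OpSpec is maximally layered w.r.t. ar (equivalently, it is not k-maximally layered w.r.t. rb⁺ for any finite k unless it is ∞-maximally layered). -/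
namespace AFC

/-! Suppose the read specification is `k`-maximally layered w.r.t. `rb⁺`. Since `r` reads
`x`, the set of events it reads from is nonempty, which forces `1 ≤ k`; hence that set
contains every `rb⁺`-maximal event of the context of `r`. One of these is `w` or lies
`rb⁺`-above it, and `r` reads from it, so it is received before `r` and `(w, r) ∈ rb⁺`. -/

theorem _root_.Set.Finite.exists_maximal_above {α : Type} {lt : α → α → Prop}
    [IsStrictOrder α lt] {S : Set α} (hS : S.Finite) {a : α} (ha : a ∈ S) :
    ∃ m ∈ S, (m = a ∨ lt a m) ∧ ∀ b ∈ S, ¬ lt m b := by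
  let := partialOrderOfSO lt
  obtain ⟨m, ham, hm, hmax⟩ := hS.exists_le_maximal ha
  refine ⟨m, hm, ham.imp Eq.symm id, fun b hb hmb => ?_⟩
  exact (hmax hb (Or.inr hmb)).elim (fun h => irrefl_of lt m (h ▸ hmb)) (asymm hmb)

section Layers

variable {α : Type} {lt : α → α → Prop} {S B : Set α} {k : ℕ} {a m : α}

namespace IsUpChain

theorem singleton (hm : m ∈ S) (hmax : ∀ b ∈ S, ¬ lt m b) : IsUpChain lt S m [m] :=
  ⟨List.cons_ne_nil m [], rfl, by simpa using hm, List.isChain_singleton m,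
    by simpa using hmax⟩

theorem pair (ha : a ∈ S) (hm : m ∈ S) (ham : lt a m) (hmax : ∀ b ∈ S, ¬ lt m b) :
    IsUpChain lt S a [a, m] :=
  ⟨List.cons_ne_nil a [m], rfl, by simp [ha, hm], List.isChain_pair.mpr ham,
    by simpa using hmax⟩

theorem length_le_one_of_maximal {l : List α} (hmax : ∀ b ∈ S, ¬ lt m b)
    (hl : IsUpChain lt S m l) : l.length ≤ 1 := by
  obtain ⟨-, hhead, hmem, hchain, -⟩ := hl
  match l, hhead, hmem, hchain with
  | [], _, _, _ | [_], _, _, _ => simp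
  | a :: b :: _, hhead, hmem, hchain =>
    cases Option.some.inj hhead
    exact (hmax b (hmem b (by simp)) (List.isChain_cons_cons.mp hchain).1).elim

end IsUpChain

theorem exists_isUpChain [IsStrictOrder α lt] (hS : S.Finite) (ha : a ∈ S) :
    ∃ l, IsUpChain lt S a l := by
  obtain ⟨m, hm, rfl | ham, hmax⟩ := hS.exists_maximal_above (lt := lt) ha
  · exact ⟨[m], .singleton hm hmax⟩
  · exact ⟨[a, m], .pair ha hm ham hmax⟩

namespace MaxLayered

theorem one_le_of_nonempty [IsStrictOrder α lt] (hS : S.Finite) (hB : MaxLayered lt S B k)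
    (hne : B.Nonempty) : 1 ≤ k := by
  obtain ⟨a, ha⟩ := hne
  rw [hB] at ha
  obtain ⟨l, hl⟩ := exists_isUpChain (lt := lt) hS ha.1
  exact (List.length_pos_iff.mpr hl.1).trans_le (ha.2 l hl)

theorem mem_of_maximal (hB : MaxLayered lt S B k) (hk : 1 ≤ k) (hm : m ∈ S)
    (hmax : ∀ b ∈ S, ¬ lt m b) : m ∈ B := by
  rw [hB]
  exact ⟨hm, fun l hl => (hl.length_le_one_of_maximal hmax).trans hk⟩

theorem exists_mem_above [IsStrictOrder α lt] (hS : S.Finite) (hB : MaxLayered lt S B k)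
    (hne : B.Nonempty) (ha : a ∈ S) : ∃ m ∈ B, m = a ∨ lt a m := by
  obtain ⟨m, hm, ham, hmax⟩ := hS.exists_maximal_above (lt := lt) ha
  exact ⟨m, hB.mem_of_maximal (hB.one_le_of_nonempty hS hne) hm hmax, ham⟩

end MaxLayered

end Layers

theorem Ctxt.ar_of_transGen_rb {Obj Val Rep Id : Type} (c : Ctxt Obj Val Rep Id)
    {a b : Evt Obj Val Rep Id} (h : Relation.TransGen c.rb a b) : c.ar a b := by
  induction h with
  | single hab => exact c.rb_sub_ar _ _ hab
  | tail _ hbc ih => exact c.ar_trans _ _ _ ih (c.rb_sub_ar _ _ hbc)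

instance Ctxt.isStrictOrder_transGen_rb {Obj Val Rep Id : Type} (c : Ctxt Obj Val Rep Id) :
    IsStrictOrder _ (Relation.TransGen c.rb) where
  irrefl a h := c.ar_irrefl a (c.ar_of_transGen_rb h)
  trans _ _ _ := Relation.TransGen.trans

section Executions

variable {Obj Val Rep Id : Type} {F : Set VisFormula} {ξ : AExec Obj Val Rep Id} {x : Obj}
  {w r : Evt Obj Val Rep Id}

theorem transGen_rb_of_transGen_execCtxt_rb {a b : Evt Obj Val Rep Id}
    (h : Relation.TransGen (execCtxt F x ξ r).rb a b) : Relation.TransGen ξ.rb a b :=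
  Relation.TransGen.mono (fun _ _ hab => hab.2.2) _ _ h

theorem VisFormula.holds.wrInv_ne_empty {v : VisFormula} (h : v.holds ξ x w r) :
    ξ.wrInv x r ≠ ∅ := by
  obtain ⟨es, -, rfl, hon⟩ := h
  exact hon.2.2.1

theorem VisFormula.holds.mem_gctxt {v : VisFormula} (hv : v ∈ F) (h : v.holds ξ x w r) :
    w ∈ gctxt F x ξ r := by
  refine ⟨?_, v, hv, h⟩
  obtain ⟨es, rfl, -, hon⟩ := h
  exact hon.1 0 (Nat.zero_le _)

theorem GValid.transGen_rb_of_mem_gctxt {O : OpSpecG Obj Val Rep Id} {k : ℕ}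
    (hval : GValid F O ξ) (hk : O.MLayeredRb k) (hread : ξ.wrInv x r ≠ ∅)
    (hw : w ∈ gctxt F x ξ r) : Relation.TransGen ξ.rb w r := by
  have hrspec : ξ.wrInv x r = rspecD F O x ξ r := (hval.2 r (ξ.wr_reads_dom x r hread) x).1
  have hne : (rspecD F O x ξ r).Nonempty := Set.nonempty_iff_ne_empty.mpr (hrspec ▸ hread)
  obtain ⟨m, hm, hwm⟩ :=
    ((hk r x _).resolve_left hne.ne_empty).exists_mem_above (execCtxt F x ξ r).finE hne hw
  have hmr : ξ.rb m r := ξ.wr_sub_rb x m r (hrspec ▸ hm)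
  rcases hwm with rfl | hwm
  · exact .single hmr
  · exact (transGen_rb_of_transGen_execCtxt_rb hwm).tail hmr

end Executions

theorem layered_wrt_ar_of_non_causal_visibility_general
    {Obj Val Rep Id : Type}
    (OpSpec : OpSpecG Obj Val Rep Id) (hml : OpSpec.MaximallyLayered)
    (CMod : CModG Obj Val Rep Id)
    (v : VisFormula) (hv : v ∈ CMod.formulas)
    (ξ : AExec Obj Val Rep Id) (hval : GValid CMod.formulas OpSpec ξ)
    (x : Obj) (w r : Evt Obj Val Rep Id)
    (h : v.holds ξ x w r) (hnrb : ¬ Relation.TransGen ξ.rb w r) :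
    (∃ k : ℕ, OpSpec.MLayeredAr k) ∨ OpSpec.MLayeredInf := by
  rcases hml with hAr | ⟨k, hRb⟩ | hInf
  · exact .inl hAr
  · exact (hnrb (hval.transGen_rb_of_mem_gctxt hRb h.wrInv_ne_empty (h.mem_gctxt hv))).elim
  · exact .inr hInf

/-- If some visibility formula of a consistency model in normal form can be witnessed
in a valid execution by a pair not related by `rb⁺`, then the read specification of the
(maximally layered) operation specification is maximally layered w.r.t. `ar`
(or `∞`-maximally layered). -/
theorem layered_wrt_ar_of_non_causal_visibility
    {Obj Val Rep Id : Type} [Infinite Obj] [Infinite Val]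
    (OpSpec : OpSpecG Obj Val Rep Id) (hml : OpSpec.MaximallyLayered)
    (CMod : CModG Obj Val Rep Id) (hnf : GInNormalForm OpSpec CMod.formulas)
    (v : VisFormula) (hv : v ∈ CMod.formulas)
    (ξ : AExec Obj Val Rep Id) (hval : GValid CMod.formulas OpSpec ξ)
    (x : Obj) (w r : Evt Obj Val Rep Id)
    (h : v.holds ξ x w r) (hnrb : ¬ Relation.TransGen ξ.rb w r) :
    (∃ k : ℕ, OpSpec.MLayeredAr k) ∨ OpSpec.MLayeredInf :=
  layered_wrt_ar_of_non_causal_visibility_general OpSpec hml CMod v hv ξ hval x w r h hnrb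

end AFC
end
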